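/- arXiv:math/9803045 — 6 statements merged into one kernel-verified Lean document; each statement's English description precedes it below -/
import Mathlib

section
/- If g_r(λ') = 0 for some 1 ≤ r ≤ N, then there exists a unique i with 1 ≤ i ≤ N such that (q_i(λ') + i + r - 1/2)/N is an integer; moreover for this i, q_i(λ') ∈ ℤ + 1/2. -/
/-- `p_i(λ')` of the paper: for `1 ≤ i ≤ N-1` this is
`λ'_i + ... + λ'_{N-1} - (1/N) ∑_{j=1}^{N-1} j λ'_j`, and for `i = N` the first
sum is empty, giving `p_N(λ') = -(1/N) ∑_{j=1}^{N-1} j λ'_j`. -/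
noncomputable def pp (N : ℕ) (l : ℕ → ℝ) (i : ℕ) : ℝ :=
  (∑ j ∈ Finset.Icc i (N - 1), l j)
    - (1 / (N : ℝ)) * ∑ j ∈ Finset.Icc 1 (N - 1), (j : ℝ) * l j

/-- `q_i(λ') = -N p_i(λ') + (N+1)/2 - i`. -/
noncomputable def qq (N : ℕ) (l : ℕ → ℝ) (i : ℕ) : ℝ :=
  -(N : ℝ) * pp N l i + ((N : ℝ) + 1) / 2 - (i : ℝ)

/-- `g_r(λ') = (-1)^r ∏_{i=1}^N 2 cos(π (p_i(λ') - r/N))`. -/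
noncomputable def gg (N : ℕ) (l : ℕ → ℝ) (r : ℕ) : ℝ :=
  (-1) ^ r * ∏ i ∈ Finset.Icc 1 N, 2 * Real.cos (Real.pi * (pp N l i - (r : ℝ) / N))


open Finset

lemma pp_diff (N : ℕ) (l : ℕ → ℝ)
    (hl : ∀ i ∈ Finset.Icc 1 (N - 1), 0 < l i ∧ l i < 1)
    (hsum : ∑ i ∈ Finset.Icc 1 (N - 1), l i < 1)
    {i j : ℕ} (hi : i ∈ Finset.Icc 1 N) (hj : j ∈ Finset.Icc 1 N) (hij : i < j) :
    0 < pp N l i - pp N l j ∧ pp N l i - pp N l j < 1 := by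
  simp only [Finset.mem_Icc] at hi hj
  have hsub : Finset.Icc j (N-1) ⊆ Finset.Icc i (N-1) :=
    Finset.Icc_subset_Icc_left hij.le
  have hdiff : pp N l i - pp N l j
      = ∑ k ∈ Finset.Icc i (N-1) \ Finset.Icc j (N-1), l k := by
    rw [Finset.sum_sdiff_eq_sub hsub]; unfold pp; ring
  have hmem : ∀ k ∈ Finset.Icc i (N-1) \ Finset.Icc j (N-1), k ∈ Finset.Icc 1 (N-1) := by
    intro k hk
    simp only [Finset.mem_sdiff, Finset.mem_Icc] at hk
    exact Finset.mem_Icc.mpr ⟨le_trans hi.1 hk.1.1, hk.1.2⟩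
  constructor
  · rw [hdiff]
    apply Finset.sum_pos
    · exact fun k hk => (hl k (hmem k hk)).1
    · refine ⟨i, ?_⟩
      simp only [Finset.mem_sdiff, Finset.mem_Icc]
      exact ⟨⟨le_refl i, by omega⟩, by omega⟩
  · rw [hdiff]
    calc ∑ k ∈ Finset.Icc i (N-1) \ Finset.Icc j (N-1), l k
        ≤ ∑ k ∈ Finset.Icc 1 (N-1), l k := by
          apply Finset.sum_le_sum_of_subset_of_nonneg hmem
          exact fun k hk _ => (hl k hk).1.le
      _ < 1 := hsum

theorem stmt_4 (N : ℕ) (hN : 2 ≤ N) (l : ℕ → ℝ)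
    (hl : ∀ i ∈ Finset.Icc 1 (N - 1), 0 < l i ∧ l i < 1)
    (hsum : ∑ i ∈ Finset.Icc 1 (N - 1), l i < 1)
    (r : ℕ) (hr : r ∈ Finset.Icc 1 N) (hg : gg N l r = 0) :
    (∃! i : ℕ, i ∈ Finset.Icc 1 N ∧
        ∃ m : ℤ, (qq N l i + (i : ℝ) + (r : ℝ) - 1 / 2) / N = (m : ℝ)) ∧
      ∀ i ∈ Finset.Icc 1 N,
        (∃ m : ℤ, (qq N l i + (i : ℝ) + (r : ℝ) - 1 / 2) / N = (m : ℝ)) →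
        ∃ j : ℤ, qq N l i = (j : ℝ) + 1 / 2 := by
  have hN0 : (N : ℝ) ≠ 0 := by positivity
  have hval : ∀ i : ℕ, (qq N l i + (i : ℝ) + (r : ℝ) - 1 / 2) / N
      = -(pp N l i) + 1/2 + (r : ℝ)/N := by
    intro i; unfold qq; field_simp; ring
  -- existence
  have hex : ∃ i ∈ Finset.Icc 1 N, ∃ m : ℤ,
      (qq N l i + (i : ℝ) + (r : ℝ) - 1 / 2) / N = (m : ℝ) := by
    unfold gg at hg
    have hprod : ∏ i ∈ Finset.Icc 1 N,
        (2 * Real.cos (Real.pi * (pp N l i - (r : ℝ) / N))) = 0 := by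
      rcases mul_eq_zero.mp hg with h | h
      · exact absurd h (pow_ne_zero _ (by norm_num))
      · exact h
    obtain ⟨i, hi, hcos⟩ := Finset.prod_eq_zero_iff.mp hprod
    have hcos0 : Real.cos (Real.pi * (pp N l i - (r : ℝ) / N)) = 0 := by
      rcases mul_eq_zero.mp hcos with h | h
      · norm_num at h
      · exact h
    obtain ⟨n, hn⟩ := Real.cos_eq_zero_iff.mp hcos0
    have hpi : pp N l i - (r : ℝ) / N = (n : ℝ) + 1/2 := by
      have h2 : Real.pi * (pp N l i - (r : ℝ) / N)
          = Real.pi * ((2 * (n:ℝ) + 1) / 2) := by rw [hn]; ring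
      have h3 := mul_left_cancel₀ Real.pi_ne_zero h2
      linarith
    refine ⟨i, hi, -n, ?_⟩
    rw [hval i]
    push_cast
    linarith
  obtain ⟨i0, hi0, m0, hm0⟩ := hex
  constructor
  · refine ⟨i0, ⟨hi0, m0, hm0⟩, ?_⟩
    rintro j ⟨hj, mj, hmj⟩
    by_contra hne
    have key : ∀ a b : ℕ, a ∈ Finset.Icc 1 N → b ∈ Finset.Icc 1 N → a < b →
        (∃ ma : ℤ, (qq N l a + (a : ℝ) + (r : ℝ) - 1 / 2) / N = (ma : ℝ)) →
        (∃ mb : ℤ, (qq N l b + (b : ℝ) + (r : ℝ) - 1 / 2) / N = (mb : ℝ)) → False := by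
      rintro a b ha hb hab ⟨ma, hma⟩ ⟨mb, hmb⟩
      rw [hval a] at hma
      rw [hval b] at hmb
      obtain ⟨h1, h2⟩ := pp_diff N l hl hsum ha hb hab
      have hd : pp N l a - pp N l b = ((mb - ma : ℤ) : ℝ) := by push_cast; linarith
      rw [hd] at h1 h2
      have : (0:ℤ) < mb - ma := by exact_mod_cast h1
      have : (mb - ma : ℤ) < 1 := by exact_mod_cast h2
      omega
    rcases lt_or_gt_of_ne hne with h | h
    · exact key j i0 hj hi0 h ⟨mj, hmj⟩ ⟨m0, hm0⟩
    · exact key i0 j hi0 hj h ⟨m0, hm0⟩ ⟨mj, hmj⟩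
  · rintro i hi ⟨m, hm⟩
    refine ⟨(N : ℤ) * m - i - r, ?_⟩
    have : qq N l i + (i : ℝ) + (r : ℝ) - 1 / 2 = (m : ℝ) * N := by
      field_simp at hm; linarith
    push_cast
    linarith
end

section
/- Suppose q_i(λ') = j + 1/2 for some integer j and some 1 ≤ i ≤ N. Then i - N/2 < i + j < i + N/2 - 1, and there exists a unique integer r with 0 < r < N+1 such that (r + j + i)/N is an integer; for this r, g_r(λ') = 0. -/
lemma Npp_eq (N : ℕ) (hN : 2 ≤ N) (l : ℕ → ℝ) (i : ℕ) (hi1 : 1 ≤ i) :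
    (N : ℝ) * pp N l i = ∑ k ∈ Finset.Icc 1 (N - 1),
      ((if i ≤ k then (N:ℝ) else 0) - (k : ℝ)) * l k := by
  have hNne : (N:ℝ) ≠ 0 := by positivity
  have hR : ∑ k ∈ Finset.Icc 1 (N - 1), ((if i ≤ k then (N:ℝ) else 0) - (k : ℝ)) * l k
      = (N:ℝ) * (∑ k ∈ Finset.Icc i (N - 1), l k)
        - ∑ k ∈ Finset.Icc 1 (N - 1), (k:ℝ) * l k := by
    rw [show (∑ k ∈ Finset.Icc 1 (N-1), ((if i ≤ k then (N:ℝ) else 0) - (k : ℝ)) * l k)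
        = ∑ k ∈ Finset.Icc 1 (N-1), ((if i ≤ k then (N:ℝ) * l k else 0) - (k:ℝ) * l k) from
        Finset.sum_congr rfl (fun k _ => by split <;> ring),
      Finset.sum_sub_distrib]
    congr 1
    rw [Finset.mul_sum, ← Finset.sum_filter]
    congr 1
    ext k
    simp only [Finset.mem_Icc, Finset.mem_filter]
    omega
  rw [hR]
  unfold pp
  rw [mul_sub]
  congr 1
  field_simp

lemma Npp_bounds (N : ℕ) (hN : 2 ≤ N) (l : ℕ → ℝ)
    (hl : ∀ i ∈ Finset.Icc 1 (N - 1), 0 < l i ∧ l i < 1)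
    (hsum : ∑ i ∈ Finset.Icc 1 (N - 1), l i < 1)
    (i : ℕ) (hi1 : 1 ≤ i) (hiN : i ≤ N) :
    1 - (i:ℝ) < (N : ℝ) * pp N l i ∧ (N : ℝ) * pp N l i < (N : ℝ) - i := by
  have hne : Finset.Nonempty (Finset.Icc 1 (N - 1)) := ⟨1, by simp; omega⟩
  have hiR : (1:ℝ) ≤ (i:ℝ) := by exact_mod_cast hi1
  have hiN' : (i:ℝ) ≤ (N:ℝ) := by exact_mod_cast hiN
  have hkfacts : ∀ k ∈ Finset.Icc 1 (N-1), (1:ℝ) ≤ (k:ℝ) ∧ (k:ℝ) ≤ (N:ℝ) - 1 := by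
    intro k hk
    simp only [Finset.mem_Icc] at hk
    constructor
    · exact_mod_cast hk.1
    · have : (k:ℝ) + 1 ≤ (N:ℝ) := by exact_mod_cast (by omega : k + 1 ≤ N)
      linarith
  rw [Npp_eq N hN l i hi1]
  constructor
  · -- lower bound
    rcases eq_or_lt_of_le hi1 with h1 | h1
    · have : (0:ℝ) < ∑ k ∈ Finset.Icc 1 (N - 1),
          ((if i ≤ k then (N:ℝ) else 0) - (k : ℝ)) * l k := by
        apply Finset.sum_pos _ hne
        intro k hk
        obtain ⟨hk1, hk2⟩ := hkfacts k hk
        have hik : i ≤ k := by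
          simp only [Finset.mem_Icc] at hk; omega
        rw [if_pos hik]
        have hlk := (hl k hk).1
        nlinarith
      have : (1:ℝ) - i = 0 := by rw [← h1]; norm_num
      linarith
    · have hi1R : (1:ℝ) < (i:ℝ) := by exact_mod_cast h1
      have key : ((1:ℝ) - i) * (∑ k ∈ Finset.Icc 1 (N - 1), l k)
          ≤ ∑ k ∈ Finset.Icc 1 (N - 1),
            ((if i ≤ k then (N:ℝ) else 0) - (k : ℝ)) * l k := by
        rw [Finset.mul_sum]
        apply Finset.sum_le_sum
        intro k hk
        obtain ⟨hk1, hk2⟩ := hkfacts k hk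
        have hlk := (hl k hk).1
        apply mul_le_mul_of_nonneg_right _ hlk.le
        split
        · linarith
        · rename_i hik
          have : (k:ℝ) ≤ (i:ℝ) - 1 := by
            have : (k:ℝ) + 1 ≤ (i:ℝ) := by exact_mod_cast (by omega : k + 1 ≤ i)
            linarith
          linarith
      have hsum0 : (0:ℝ) ≤ ∑ k ∈ Finset.Icc 1 (N - 1), l k :=
        Finset.sum_nonneg fun k hk => (hl k hk).1.le
      nlinarith
  · -- upper bound
    rcases eq_or_lt_of_le hiN with h1 | h1
    · have : ∑ k ∈ Finset.Icc 1 (N - 1),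
          ((if i ≤ k then (N:ℝ) else 0) - (k : ℝ)) * l k < 0 := by
        apply Finset.sum_neg _ hne
        intro k hk
        have hik : ¬ i ≤ k := by
          simp only [Finset.mem_Icc] at hk; omega
        rw [if_neg hik]
        obtain ⟨hk1, hk2⟩ := hkfacts k hk
        have hlk := (hl k hk).1
        nlinarith
      have : (N:ℝ) - i = 0 := by rw [h1]; ring
      linarith
    · have hiNR : (i:ℝ) < (N:ℝ) := by exact_mod_cast h1
      have key : ∑ k ∈ Finset.Icc 1 (N - 1),
            ((if i ≤ k then (N:ℝ) else 0) - (k : ℝ)) * l k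
          ≤ ((N:ℝ) - i) * (∑ k ∈ Finset.Icc 1 (N - 1), l k) := by
        rw [Finset.mul_sum]
        apply Finset.sum_le_sum
        intro k hk
        obtain ⟨hk1, hk2⟩ := hkfacts k hk
        have hlk := (hl k hk).1
        apply mul_le_mul_of_nonneg_right _ hlk.le
        split
        · rename_i hik
          have : (i:ℝ) ≤ (k:ℝ) := by exact_mod_cast hik
          linarith
        · linarith
      have hsum0 : (0:ℝ) ≤ ∑ k ∈ Finset.Icc 1 (N - 1), l k :=
        Finset.sum_nonneg fun k hk => (hl k hk).1.le
      nlinarith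

theorem stmt_5 (N : ℕ) (hN : 2 ≤ N) (l : ℕ → ℝ)
    (hl : ∀ i ∈ Finset.Icc 1 (N - 1), 0 < l i ∧ l i < 1)
    (hsum : ∑ i ∈ Finset.Icc 1 (N - 1), l i < 1)
    (i : ℕ) (hi : i ∈ Finset.Icc 1 N) (j : ℤ) (hq : qq N l i = (j : ℝ) + 1 / 2) :
    ((i : ℝ) - (N : ℝ) / 2 < (i : ℝ) + (j : ℝ) ∧
      (i : ℝ) + (j : ℝ) < (i : ℝ) + (N : ℝ) / 2 - 1) ∧
    (∃! r : ℕ, 0 < r ∧ r < N + 1 ∧ ∃ m : ℤ, ((r : ℝ) + (j : ℝ) + (i : ℝ)) / N = (m : ℝ)) ∧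
    ∀ r : ℕ, 0 < r → r < N + 1 →
      (∃ m : ℤ, ((r : ℝ) + (j : ℝ) + (i : ℝ)) / N = (m : ℝ)) → gg N l r = 0 := by
  simp only [Finset.mem_Icc] at hi
  have hN0 : (0:ℝ) < N := by positivity
  have hNne : (N:ℝ) ≠ 0 := ne_of_gt hN0
  have hP : (N:ℝ) * pp N l i = (N:ℝ)/2 - i - j := by
    unfold qq at hq; linarith
  obtain ⟨hlo, hhi⟩ := Npp_bounds N hN l hl hsum i hi.1 hi.2
  rw [hP] at hlo hhi
  refine ⟨⟨by linarith, by linarith⟩, ?_, ?_⟩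
  · -- existence and uniqueness of r
    have hNZ : (0:ℤ) < (N:ℤ) := by exact_mod_cast (by omega : 0 < N)
    set a : ℤ := j + i with ha
    set q : ℤ := (-a - 1) / N with hqdef
    have hmod := Int.emod_nonneg (-a - 1) (ne_of_gt hNZ)
    have hmod2 := Int.emod_lt_of_pos (-a - 1) hNZ
    have hed : (-a - 1) % N = (-a - 1) - N * q := Int.emod_def _ _
    set r0 : ℤ := (-a - 1) % N + 1 with hr0
    have h2 : r0 + a = -q * N := by rw [hr0, hed]; ring
    refine ⟨r0.toNat, ⟨by omega, by omega, ⟨-q, ?_⟩⟩, ?_⟩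
    · rw [div_eq_iff hNne]
      have hco : ((r0.toNat : ℕ) : ℝ) = ((r0 : ℤ) : ℝ) := by
        exact_mod_cast congrArg (Int.cast : ℤ → ℝ)
          (Int.toNat_of_nonneg (by omega : (0:ℤ) ≤ r0))
      rw [hco]
      have := congrArg (Int.cast : ℤ → ℝ) h2
      push_cast [ha] at this
      push_cast
      linarith
    · rintro r ⟨hr0', hrN', m, hm⟩
      rw [div_eq_iff hNne] at hm
      have hm' : (r : ℤ) + j + i = m * N := by exact_mod_cast hm
      have hdiff : (r:ℤ) - r0 = (m + q) * N := by linear_combination hm' - h2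
      have hd : (N:ℤ) ∣ ((r:ℤ) - r0) := ⟨m + q, by linarith [hdiff]⟩
      have hrle : (r:ℤ) ≤ N := by exact_mod_cast Nat.lt_succ_iff.mp hrN'
      have hrge : (1:ℤ) ≤ (r:ℤ) := by exact_mod_cast hr0'
      have habs : |(r:ℤ) - r0| < N := abs_lt.mpr ⟨by omega, by omega⟩
      have : (r:ℤ) - r0 = 0 := Int.eq_zero_of_abs_lt_dvd hd habs
      omega
  · -- gg vanishes
    rintro r hr0 hrN ⟨m, hm⟩
    rw [div_eq_iff hNne] at hm
    unfold gg
    apply mul_eq_zero_of_right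
    apply Finset.prod_eq_zero (Finset.mem_Icc.mpr hi)
    have hpi : pp N l i - (r:ℝ)/N = 1/2 - m := by
      apply mul_left_cancel₀ hNne
      rw [mul_sub, hP, mul_comm ((N:ℝ)) ((r:ℝ)/N), div_mul_cancel₀ _ hNne]
      linarith [hm]
    rw [hpi, show Real.pi * (1/2 - (m:ℝ)) = Real.pi/2 - m * Real.pi by ring,
      Real.cos_pi_div_two_sub, Real.sin_int_mul_pi, mul_zero]
end

section
/- The number of indices i ∈ {1,...,N} with q_i(λ') ∈ ℤ + 1/2 equals the number of indices r ∈ {1,...,N} with g_r(λ') = 0; in particular there is a bijection between these two sets. -/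
noncomputable def aa (N : ℕ) (l : ℕ → ℝ) (i : ℕ) : ℝ :=
  (N : ℝ) * pp N l i - (N : ℝ) / 2

lemma aa_diff (N : ℕ) (hN : 2 ≤ N) (l : ℕ → ℝ)
    (hl : ∀ i ∈ Finset.Icc 1 (N - 1), 0 < l i ∧ l i < 1)
    (hsum : ∑ i ∈ Finset.Icc 1 (N - 1), l i < 1)
    {i i' : ℕ} (h1 : 1 ≤ i) (h2 : i < i') (h3 : i' ≤ N) :
    0 < aa N l i - aa N l i' ∧ aa N l i - aa N l i' < N := by
  have hNpos : (0 : ℝ) < N := by positivity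
  have e1 : Finset.Icc i (N - 1) = Finset.Ioc (i - 1) (N - 1) := by
    rw [← Finset.Icc_add_one_left_eq_Ioc]; congr 1; omega
  have e2 : Finset.Icc i' (N - 1) = Finset.Ioc (i' - 1) (N - 1) := by
    rw [← Finset.Icc_add_one_left_eq_Ioc]; congr 1; omega
  have e : (∑ j ∈ Finset.Ioc (i - 1) (i' - 1), l j)
      + ∑ j ∈ Finset.Ioc (i' - 1) (N - 1), l j
      = ∑ j ∈ Finset.Ioc (i - 1) (N - 1), l j :=
    Finset.sum_Ioc_consecutive _ (by omega) (by omega)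
  have hd : pp N l i - pp N l i' = ∑ j ∈ Finset.Ioc (i - 1) (i' - 1), l j := by
    simp only [pp, e1, e2]; ring_nf; linarith [e]
  have hmem : ∀ j ∈ Finset.Ioc (i - 1) (i' - 1), j ∈ Finset.Icc 1 (N - 1) := by
    intro j hj
    simp only [Finset.mem_Ioc] at hj
    simp only [Finset.mem_Icc]; omega
  have hpos : 0 < pp N l i - pp N l i' := by
    rw [hd]
    apply Finset.sum_pos
    · intro j hj; exact (hl j (hmem j hj)).1
    · exact ⟨i, by simp only [Finset.mem_Ioc]; omega⟩
  have hlt : pp N l i - pp N l i' < 1 := by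
    rw [hd]
    calc ∑ j ∈ Finset.Ioc (i - 1) (i' - 1), l j
        ≤ ∑ j ∈ Finset.Icc 1 (N - 1), l j :=
          Finset.sum_le_sum_of_subset_of_nonneg hmem
            (fun j hj _ => (hl j hj).1.le)
      _ < 1 := hsum
  constructor
  · have : aa N l i - aa N l i' = N * (pp N l i - pp N l i') := by
      simp [aa]; ring
    rw [this]; positivity
  · have : aa N l i - aa N l i' = N * (pp N l i - pp N l i') := by
      simp [aa]; ring
    rw [this]
    nlinarith

lemma left_char (N : ℕ) (hN : 2 ≤ N) (l : ℕ → ℝ) (i : ℕ) :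
    (∃ j : ℤ, qq N l i = (j : ℝ) + 1 / 2) ↔ ∃ k : ℤ, aa N l i = (k : ℝ) := by
  have hq : qq N l i = -aa N l i + 1 / 2 - i := by simp [qq, aa]; ring
  constructor
  · rintro ⟨j, hj⟩
    exact ⟨-j - i, by push_cast; rw [hq] at hj; linarith⟩
  · rintro ⟨k, hk⟩
    exact ⟨-k - i, by rw [hq, hk]; push_cast; ring⟩

lemma right_char (N : ℕ) (hN : 2 ≤ N) (l : ℕ → ℝ) (r : ℕ) :
    gg N l r = 0 ↔ ∃ i ∈ Finset.Icc 1 N, ∃ k : ℤ, aa N l i = (r : ℝ) + N * k := by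
  have hNpos : (0 : ℝ) < N := by positivity
  have hpi := Real.pi_pos
  have h1 : gg N l r = 0 ↔
      ∃ i ∈ Finset.Icc 1 N, Real.cos (Real.pi * (pp N l i - (r : ℝ) / N)) = 0 := by
    rw [gg, mul_eq_zero]
    constructor
    · rintro (h | h)
      · exact absurd h (by positivity)
      · obtain ⟨i, hi, h⟩ := Finset.prod_eq_zero_iff.mp h
        exact ⟨i, hi, by linarith [mul_eq_zero.mp h]⟩
    · rintro ⟨i, hi, h⟩
      right
      exact Finset.prod_eq_zero hi (by rw [h]; ring)
  rw [h1]
  apply exists_congr; intro i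
  apply and_congr_right; intro hi
  rw [Real.cos_eq_zero_iff]
  constructor
  · rintro ⟨k, hk⟩
    refine ⟨k, ?_⟩
    have hx : pp N l i - (r : ℝ) / N = (2 * k + 1) / 2 := by
      field_simp at hk ⊢
      nlinarith [hk]
    have : (N : ℝ) * (pp N l i - (r : ℝ) / N) = N * ((2 * k + 1) / 2) := by rw [hx]
    rw [mul_sub, mul_div_cancel₀ _ hNpos.ne'] at this
    simp only [aa]
    push_cast
    linarith
  · rintro ⟨k, hk⟩
    refine ⟨k, ?_⟩
    simp only [aa] at hk
    have hx : pp N l i - (r : ℝ) / N = (2 * k + 1) / 2 := by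
      field_simp
      push_cast at hk ⊢
      nlinarith [hk]
    rw [hx]; ring

open Classical in
theorem stmt_6 (N : ℕ) (hN : 2 ≤ N) (l : ℕ → ℝ)
    (hl : ∀ i ∈ Finset.Icc 1 (N - 1), 0 < l i ∧ l i < 1)
    (hsum : ∑ i ∈ Finset.Icc 1 (N - 1), l i < 1) :
    ((Finset.Icc 1 N).filter (fun i => ∃ j : ℤ, qq N l i = (j : ℝ) + 1 / 2)).card =
      ((Finset.Icc 1 N).filter (fun r => gg N l r = 0)).card := by
  have hNZ : (0 : ℤ) < N := by omega
  have key : ∀ i ∈ (Finset.Icc 1 N).filter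
      (fun i => ∃ j : ℤ, qq N l i = (j : ℝ) + 1 / 2),
      aa N l i = ((⌊aa N l i⌋ : ℤ) : ℝ) := by
    intro i hi
    rw [Finset.mem_filter] at hi
    obtain ⟨k, hk⟩ := (left_char N hN l i).mp hi.2
    rw [hk, Int.floor_intCast]
  apply Finset.card_bij (fun i _ => ((⌊aa N l i⌋ - 1) % N).toNat + 1)
  · -- maps into target
    intro i hi
    have hai := key i hi
    rw [Finset.mem_filter] at hi ⊢
    set k := ⌊aa N l i⌋ with hkdef
    have hmod0 := Int.emod_nonneg (k - 1) hNZ.ne'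
    have hmod1 := Int.emod_lt_of_pos (k - 1) hNZ
    have hdiv := Int.emod_add_mul_ediv (k - 1) N
    refine ⟨by simp only [Finset.mem_Icc]; omega, ?_⟩
    rw [right_char N hN l]
    refine ⟨i, hi.1, (k - 1) / N, ?_⟩
    rw [hai]
    have : (k : ℤ) = (((k - 1) % N).toNat + 1 : ℤ) + N * ((k - 1) / N) := by omega
    exact_mod_cast this
  · -- injective
    intro i hi i' hi' heq
    have hai := key i hi
    have hai' := key i' hi'
    have hmod : (⌊aa N l i⌋ - 1) % N = (⌊aa N l i'⌋ - 1) % N := by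
      have h0 := Int.emod_nonneg (⌊aa N l i⌋ - 1) hNZ.ne'
      have h0' := Int.emod_nonneg (⌊aa N l i'⌋ - 1) hNZ.ne'
      omega
    have hdvd : (N : ℤ) ∣ ⌊aa N l i⌋ - ⌊aa N l i'⌋ := by
      obtain ⟨c, hc⟩ := Int.ModEq.dvd (show Int.ModEq (N:ℤ) (⌊aa N l i⌋ - 1) (⌊aa N l i'⌋ - 1) from hmod)
      exact ⟨-c, by linarith⟩
    obtain ⟨m, hm⟩ := hdvd
    have hmi : Finset.mem_Icc.mp (Finset.mem_filter.mp hi).1 = Finset.mem_Icc.mp (Finset.mem_filter.mp hi).1 := rfl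
    have hi1 := Finset.mem_Icc.mp (Finset.mem_filter.mp hi).1
    have hi1' := Finset.mem_Icc.mp (Finset.mem_filter.mp hi').1
    by_contra hne
    have hreal : aa N l i - aa N l i' = (N : ℝ) * m := by
      rw [hai, hai']
      have : ((⌊aa N l i⌋ : ℤ) : ℝ) - ((⌊aa N l i'⌋ : ℤ) : ℝ) = ((N * m : ℤ) : ℝ) := by
        exact_mod_cast congrArg (fun z : ℤ => (z : ℝ)) hm
      push_cast at this ⊢
      linarith
    have hNpos : (0 : ℝ) < N := by positivity
    rcases lt_trichotomy i i' with h | h | h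
    · obtain ⟨hp, hq⟩ := aa_diff N hN l hl hsum hi1.1 h hi1'.2
      rw [hreal] at hp hq
      have hm0 : (0 : ℝ) < (m : ℝ) := by nlinarith
      have hm1 : (m : ℝ) < 1 := by nlinarith
      have : (0 : ℤ) < m ∧ m < 1 := by exact_mod_cast And.intro hm0 hm1
      omega
    · exact hne h
    · obtain ⟨hp, hq⟩ := aa_diff N hN l hl hsum hi1'.1 h hi1.2
      rw [show aa N l i' - aa N l i = (N:ℝ) * (-(m:ℝ)) by push_cast; linarith] at hp hq
      have hm0 : (0 : ℝ) < -(m : ℝ) := by nlinarith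
      have hm1 : -(m : ℝ) < 1 := by nlinarith
      have : (0 : ℤ) < -m ∧ -m < 1 := by
        constructor
        · have : (0:ℝ) < ((-m : ℤ) : ℝ) := by push_cast; linarith
          exact_mod_cast this
        · have : ((-m : ℤ) : ℝ) < 1 := by push_cast; linarith
          exact_mod_cast this
      omega
  · -- surjective
    intro r hr
    rw [Finset.mem_filter] at hr
    obtain ⟨i, hi, k, hk⟩ := (right_char N hN l r).mp hr.2
    have hi1 := Finset.mem_Icc.mp hi
    have hr1 := Finset.mem_Icc.mp hr.1
    have hikZ : aa N l i = (((r : ℤ) + N * k : ℤ) : ℝ) := by push_cast; linarith [hk]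
    refine ⟨i, Finset.mem_filter.mpr ⟨hi, (left_char N hN l i).mpr ⟨(r : ℤ) + N * k, hikZ⟩⟩, ?_⟩
    rw [hikZ, Int.floor_intCast]
    have h1 : ((r : ℤ) + N * k - 1) % N = ((r : ℤ) - 1) % N := by
      conv_lhs => rw [show (r : ℤ) + N * k - 1 = (r : ℤ) - 1 + N * k by ring]
      exact Int.add_mul_emod_self_left _ _ _
    have h2 : ((r : ℤ) - 1) % N = (r : ℤ) - 1 :=
      Int.emod_eq_of_lt (by omega) (by omega)
    rw [h1, h2]
    omega
end

section
/- The number of i ∈ {1,...,N} with cos(π q_i(λ')) > 0 equals the number of r ∈ {1,...,N} with g_r(λ') > 0; the same holds with '> 0' replaced by '< 0', and with '= 0'. -/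
open Finset Real

noncomputable def sgnz (x : ℝ) : ℤ := if 0 < x then 1 else if x < 0 then -1 else 0

lemma sum_sgnz (s : Finset ℕ) (F : ℕ → ℝ) [∀ i, Decidable (0 < F i)] [∀ i, Decidable (F i < 0)] :
    ∑ i ∈ s, sgnz (F i) =
      ((s.filter fun i => 0 < F i).card : ℤ) - ((s.filter fun i => F i < 0).card : ℤ) := by
  classical
  induction s using Finset.induction_on with
  | empty => simp
  | @insert a s ha ih =>
    rw [Finset.sum_insert ha, Finset.filter_insert, Finset.filter_insert, ih]
    by_cases h1 : 0 < F a
    · rw [if_pos h1, if_neg (by linarith)]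
      rw [Finset.card_insert_of_notMem (fun hc => ha (Finset.mem_of_mem_filter a hc))]
      simp only [sgnz, if_pos h1]
      push_cast; ring
    · by_cases h2 : F a < 0
      · rw [if_neg h1, if_pos h2]
        rw [Finset.card_insert_of_notMem (fun hc => ha (Finset.mem_of_mem_filter a hc))]
        simp only [sgnz, if_neg h1, if_pos h2]
        push_cast; ring
      · rw [if_neg h1, if_neg h2]
        simp only [sgnz, if_neg h1, if_neg h2]
        ring

lemma card_partition (s : Finset ℕ) (F : ℕ → ℝ) [∀ i, Decidable (0 < F i)]
    [∀ i, Decidable (F i < 0)] [∀ i, Decidable (F i = 0)] :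
    (s.filter fun i => 0 < F i).card + (s.filter fun i => F i < 0).card
      + (s.filter fun i => F i = 0).card = s.card := by
  classical
  induction s using Finset.induction_on with
  | empty => simp
  | @insert a s ha ih =>
    rw [Finset.filter_insert, Finset.filter_insert, Finset.filter_insert,
      Finset.card_insert_of_notMem ha]
    have hni : ∀ (p : ℕ → Prop) [DecidablePred p], a ∉ s.filter p :=
      fun p _ hc => ha (Finset.mem_of_mem_filter a hc)
    rcases lt_trichotomy (F a) 0 with h2 | h2 | h2
    · rw [if_neg (by linarith), if_pos h2, if_neg (by linarith)]
      rw [Finset.card_insert_of_notMem (hni _)]; omega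
    · rw [if_neg (by linarith), if_neg (by linarith), if_pos h2]
      rw [Finset.card_insert_of_notMem (hni _)]; omega
    · rw [if_pos h2, if_neg (by linarith), if_neg (by linarith)]
      rw [Finset.card_insert_of_notMem (hni _)]; omega

lemma sgnz_unit_mul (e : ℤˣ) (a : ℝ) (ha : 0 ≤ a) :
    sgnz ((e : ℤ) * a) = if a = 0 then 0 else (e : ℤ) := by
  rcases eq_or_lt_of_le ha with h0 | h0
  · simp [sgnz, ← h0]
  · rw [if_neg (ne_of_gt h0)]
    rcases Int.units_eq_one_or e with he | he <;> rw [he] <;> simp only [Units.val_one,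
      Units.val_neg, Int.cast_one, Int.cast_neg, one_mul, neg_mul, sgnz]
    · rw [if_pos h0]
    · rw [if_neg (by linarith), if_pos (by linarith)]


noncomputable def epz (k : ℤ) : ℤ := (k.negOnePow : ℤ)

lemma epz_add (a b : ℤ) : epz (a + b) = epz a * epz b := by
  unfold epz; rw [Int.negOnePow_add]; push_cast; ring

lemma epz_eq_iff (a b : ℤ) : epz a = epz b ↔ Even (a - b) := by
  unfold epz
  rw [← Int.negOnePow_eq_iff]
  exact ⟨fun h => Units.ext h, fun h => by rw [h]⟩

lemma epz_even {a : ℤ} (h : Even a) : epz a = 1 := by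
  unfold epz; rw [Int.negOnePow_even _ h]; rfl

lemma epz_odd {a : ℤ} (h : Odd a) : epz a = -1 := by
  unfold epz; rw [Int.negOnePow_odd _ h]; rfl

lemma epz_sq (a : ℤ) : epz a * epz a = 1 := by
  rw [← epz_add]; exact epz_even ⟨a, rfl⟩

lemma epz_eq_one_or (a : ℤ) : epz a = 1 ∨ epz a = -1 := by
  unfold epz
  rcases Int.units_eq_one_or (a.negOnePow) with h | h <;> rw [h] <;> simp

lemma epz_cast_pow (r : ℕ) : ((-1 : ℝ)) ^ r = ((epz r : ℤ) : ℝ) := by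
  unfold epz
  rw [Int.cast_negOnePow_natCast ℝ r]

lemma epz_natCast (m : ℕ) : epz (m : ℤ) = if Even m then 1 else -1 := by
  rcases Nat.even_or_odd m with h | h
  · rw [if_pos h]; exact epz_even ((Int.even_coe_nat m).mpr h)
  · rw [if_neg (by simpa [Nat.not_even_iff_odd] using h)]
    exact epz_odd ((Int.odd_coe_nat m).mpr h)

lemma alt_sum (n : ℕ) : ∑ r ∈ Finset.Icc 1 n, epz r = if Even n then 0 else -1 := by
  induction n with
  | zero => simp
  | succ n ih =>
    rw [Finset.sum_Icc_succ_top (by omega), ih]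
    rw [epz_natCast (n + 1)]
    rcases Nat.even_or_odd n with h | h
    · rw [if_pos h, if_neg (by simp [Nat.even_add_one, h]), if_neg (by simp [Nat.even_add_one, h])]
      ring
    · rw [if_neg (by simpa [Nat.not_even_iff_odd] using h),
        if_pos (Nat.even_add_one.mpr (by simpa [Nat.not_even_iff_odd] using h)),
        if_pos (Nat.even_add_one.mpr (by simpa [Nat.not_even_iff_odd] using h))]
      ring

lemma floor_div_eq (n : ℕ) (hn : 1 ≤ n) (c : ℤ) (y : ℝ) (h1 : (c : ℝ) * n ≤ y)
    (h2 : y < (c + 1) * n) : ⌊y / (n : ℝ)⌋ = c := by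
  have hn' : (0 : ℝ) < n := by exact_mod_cast hn
  rw [Int.floor_eq_iff]
  constructor
  · rw [le_div_iff₀ hn']; exact h1
  · rw [div_lt_iff₀ hn']; push_cast; push_cast at h2; linarith

lemma floor_div_shift (x : ℝ) (k : ℤ) (n : ℕ) (hn : 1 ≤ n) (h1 : (k : ℝ) ≤ x)
    (h2 : x < (k : ℝ) + 1) : ⌊x / (n : ℝ)⌋ = ⌊((k : ℤ) : ℝ) / (n : ℝ)⌋ := by
  have hn' : (0 : ℝ) < n := by exact_mod_cast hn
  set c := ⌊((k : ℤ) : ℝ) / (n : ℝ)⌋ with hc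
  have hc1 : (c : ℝ) ≤ (k : ℝ) / n := Int.floor_le _
  have hc2 : (k : ℝ) / n < c + 1 := Int.lt_floor_add_one _
  rw [le_div_iff₀ hn'] at hc1
  rw [div_lt_iff₀ hn'] at hc2
  have hkn' : (k : ℤ) < (c + 1) * (n : ℤ) := by exact_mod_cast hc2
  have hk1 : (k : ℤ) + 1 ≤ (c + 1) * (n : ℤ) := hkn'
  have hk1' : (k : ℝ) + 1 ≤ ((c : ℝ) + 1) * n := by exact_mod_cast hk1
  exact floor_div_eq n hn c x (by linarith) (by linarith)

lemma sin_pi_decomp (x : ℝ) :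
    Real.sin (π * x) = ((epz ⌊x⌋ : ℤ) : ℝ) * Real.sin (π * Int.fract x) := by
  have h : π * x = π * Int.fract x + ⌊x⌋ * π := by
    have := Int.fract_add_floor x
    linear_combination (-π) * this
  rw [h, Real.sin_add_int_mul_pi, ← Int.cast_negOnePow ℝ ⌊x⌋]
  norm_cast

lemma sin_fract_nonneg (x : ℝ) : 0 ≤ Real.sin (π * Int.fract x) := by
  apply Real.sin_nonneg_of_nonneg_of_le_pi
  · exact mul_nonneg Real.pi_pos.le (Int.fract_nonneg x)
  · nlinarith [Real.pi_pos, Int.fract_lt_one x, Int.fract_nonneg x]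

lemma sin_fract_eq_zero_iff (x : ℝ) : Real.sin (π * Int.fract x) = 0 ↔ Int.fract x = 0 := by
  constructor
  · intro h
    by_contra hne
    have hpos : 0 < Int.fract x := lt_of_le_of_ne (Int.fract_nonneg x) (Ne.symm hne)
    have := Real.sin_pos_of_pos_of_lt_pi (mul_pos Real.pi_pos hpos)
      (by nlinarith [Int.fract_lt_one x, Real.pi_pos])
    linarith
  · intro h; rw [h]; simp

lemma cos_pi_decomp (θ : ℝ) (n : ℤ) :
    Real.cos (θ + n * π) = ((epz n : ℤ) : ℝ) * Real.cos θ := by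
  rw [Real.cos_add_int_mul_pi, ← Int.cast_negOnePow ℝ n]
  norm_cast

lemma claimA (N : ℕ) (hN : 1 ≤ N) (m : ℕ → ℤ) (j : ℕ) (hj1 : 1 ≤ j) (hjN : j ≤ N)
    (hup : ∀ l, 1 ≤ l → l < j → m j < m l ∧ m l ≤ m j + N)
    (hdown : ∀ l, j ≤ l → l ≤ N → m j - N < m l ∧ m l ≤ m j)
    (r₀ : ℕ) (hr1 : 1 ≤ r₀) (hr2 : r₀ ≤ N) (c : ℤ) (hc : m j = (r₀ : ℤ) + c * N) :
    epz ((r₀ : ℤ) + ∑ l ∈ Finset.Icc 1 N, ⌊((r₀ : ℝ) - (m l : ℝ)) / (N : ℝ)⌋)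
      = epz ((j : ℤ) + m j + 1) := by
  have hNr : (0:ℝ) < (N:ℝ) := by exact_mod_cast hN
  have hsum : ∑ l ∈ Finset.Icc 1 N, ⌊((r₀ : ℝ) - (m l : ℝ)) / (N : ℝ)⌋
      = (j - 1 : ℕ) • (-(c+1)) + (N + 1 - j : ℕ) • (-c) := by
    rw [← Finset.Ico_add_one_right_eq_Icc,
      ← Finset.sum_Ico_consecutive _ (by omega : 1 ≤ j) (by omega : j ≤ N + 1)]
    congr 1
    · rw [Finset.sum_congr rfl (fun l hl => ?_), Finset.sum_const, Nat.card_Ico]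
      rw [Finset.mem_Ico] at hl
      have h1 := hup l hl.1 hl.2
      apply floor_div_eq N hN
      · have : (m l : ℝ) ≤ (m j : ℝ) + N := by exact_mod_cast h1.2
        rw [hc] at this; push_cast at this ⊢; linarith
      · have : (m j : ℝ) < (m l : ℝ) := by exact_mod_cast h1.1
        rw [hc] at this; push_cast at this ⊢; linarith
    · rw [Finset.sum_congr rfl (fun l hl => ?_), Finset.sum_const, Nat.card_Ico]
      rw [Finset.mem_Ico] at hl
      have h1 := hdown l hl.1 (by omega)
      apply floor_div_eq N hN
      · have : (m l : ℝ) ≤ (m j : ℝ) := by exact_mod_cast h1.2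
        rw [hc] at this; push_cast at this ⊢; linarith
      · have : (m j : ℝ) - N < (m l : ℝ) := by exact_mod_cast h1.1
        rw [hc] at this; push_cast at this ⊢; linarith
  rw [hsum, epz_eq_iff]
  have e1 : ((j - 1 : ℕ) : ℤ) = (j : ℤ) - 1 := by omega
  have e2 : ((N + 1 - j : ℕ) : ℤ) = (N : ℤ) + 1 - j := by omega
  have e3 : ((1 + N - j : ℕ) : ℤ) = 1 + (N : ℤ) - j := by omega
  refine ⟨-(j:ℤ) - c * N, ?_⟩
  rw [hc]
  rw [nsmul_eq_mul, nsmul_eq_mul, e1, e2]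
  ring

lemma epz_succ (k : ℤ) : epz (k + 1) = -epz k := by
  rw [epz_add]
  have : epz 1 = -1 := by unfold epz; rw [Int.negOnePow_one]; rfl
  rw [this]; ring

lemma mono_of_adj (N : ℕ) (m : ℕ → ℤ) (hsort : ∀ i, 1 ≤ i → i < N → m (i+1) ≤ m i) :
    ∀ i j, 1 ≤ i → i ≤ j → j ≤ N → m j ≤ m i := by
  intro i j hi hij hjN
  induction j with
  | zero => omega
  | succ j ih =>
    rcases Nat.lt_or_ge i (j+1) with h | h
    · have hij' : i ≤ j := by omega
      exact le_trans (hsort j (by omega) (by omega)) (ih hij' (by omega))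
    · have : i = j + 1 := by omega
      rw [this]

lemma exists_res (N : ℕ) (hN : 1 ≤ N) (a : ℤ) :
    ∃ (r₀ : ℕ) (c : ℤ), 1 ≤ r₀ ∧ r₀ ≤ N ∧ a = (r₀ : ℤ) + c * N := by
  have hN' : (0:ℤ) < N := by exact_mod_cast hN
  have h0 : 0 ≤ (a-1) % N := Int.emod_nonneg _ (by omega)
  have h1 : (a-1) % N < N := Int.emod_lt_of_pos _ hN'
  refine ⟨((a-1) % N).toNat + 1, (a-1) / N, by omega, by omega, ?_⟩
  have h2 := Int.emod_add_mul_ediv (a-1) N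
  push_cast [Int.toNat_of_nonneg h0]
  linarith [h2]

lemma floor_window (N : ℕ) (hN : 1 ≤ N) (a : ℤ) (r : ℕ) (c : ℤ) (r₀ : ℕ)
    (hc : a = (r₀ : ℤ) + c * N) (hra : 1 ≤ r) (hrb : r ≤ N) (h1 : 1 ≤ r₀) (h2 : r₀ ≤ N) :
    ⌊((r : ℝ) - (a : ℝ)) / (N : ℝ)⌋ = if r < r₀ then -(c+1) else -c := by
  have har : (a : ℝ) = (r₀ : ℝ) + c * N := by exact_mod_cast hc
  have hr₀N : (r₀ : ℝ) ≤ (N : ℝ) := by exact_mod_cast h2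
  have hrN : (r : ℝ) ≤ (N : ℝ) := by exact_mod_cast hrb
  have h1r : (1 : ℝ) ≤ (r₀ : ℝ) := by exact_mod_cast h1
  by_cases h : r < r₀
  · rw [if_pos h]
    have hrr : (r : ℝ) ≤ (r₀ : ℝ) - 1 := by
      have : (r : ℤ) ≤ (r₀ : ℤ) - 1 := by omega
      exact_mod_cast this
    have hr1 : (1 : ℝ) ≤ (r : ℝ) := by exact_mod_cast hra
    apply floor_div_eq N hN
    · rw [har]; push_cast; linarith
    · rw [har]; push_cast; linarith
  · rw [if_neg h]
    have hrr : (r₀ : ℝ) ≤ (r : ℝ) := by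
      have : (r₀ : ℤ) ≤ (r : ℤ) := by omega
      exact_mod_cast this
    apply floor_div_eq N hN
    · rw [har]; push_cast; linarith
    · rw [har]; push_cast; linarith

lemma base_calc (N r₀ : ℕ) (c : ℤ) (hN : 1 ≤ N) (h1 : 1 ≤ r₀) (h2 : r₀ ≤ N) :
    epz ((N:ℤ) * (-(c+1))) * (∑ r ∈ Finset.Icc 1 (r₀-1), epz r)
      + epz ((N:ℤ) * (-c)) * ((∑ r ∈ Finset.Icc 1 N, epz r) - ∑ r ∈ Finset.Icc 1 (r₀-1), epz r)
      = epz ((r₀:ℤ) + c * N + 1) * ∑ r ∈ Finset.Icc 1 N, epz r := by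
  rw [alt_sum, alt_sum]
  have hNev : Even ((N:ℤ)) ↔ Even N := Int.even_coe_nat N
  rcases Nat.even_or_odd N with hN2 | hN2
  · have e1 : epz ((N:ℤ) * (-(c+1))) = 1 := epz_even ((hNev.mpr hN2).mul_right _)
    have e2 : epz ((N:ℤ) * (-c)) = 1 := epz_even ((hNev.mpr hN2).mul_right _)
    have e4 : Even N := hN2
    rw [e1, e2, if_pos e4]
    ring
  · have hN3 : ¬ Even N := by simpa [Nat.not_even_iff_odd] using hN2
    rw [if_neg hN3]
    have hNo : Odd ((N:ℤ)) := by exact_mod_cast hN2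
    rcases Int.even_or_odd c with hc2 | hc2
    · have e1 : epz ((N:ℤ) * (-(c+1))) = -1 :=
        epz_odd (hNo.mul (hc2.add_one.neg))
      have e2 : epz ((N:ℤ) * (-c)) = 1 := epz_even (hc2.neg.mul_left _)
      rw [e1, e2]
      have e3 : epz ((r₀:ℤ) + c * N + 1) = epz ((r₀:ℤ) + 1) := by
        rw [epz_eq_iff]
        rcases hc2 with ⟨k, hk⟩; exact ⟨k * N, by rw [hk]; ring⟩
      rw [e3]
      rcases Nat.even_or_odd r₀ with hr2 | hr2
      · have a1 : ¬ Even (r₀ - 1) := by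
          rw [Nat.even_sub h1]; simp [hr2]
        rw [if_neg a1]
        have a2 : epz ((r₀:ℤ) + 1) = -1 :=
          epz_odd (((Int.even_coe_nat r₀).mpr hr2).add_one)
        rw [a2]; ring
      · have a1 : Even (r₀ - 1) := by
          rw [Nat.even_sub h1]
          simp [Nat.not_even_iff_odd, hr2]
        rw [if_pos a1]
        have a2 : epz ((r₀:ℤ) + 1) = 1 := by
          apply epz_even
          have : Odd ((r₀:ℤ)) := by exact_mod_cast hr2
          exact this.add_one
        rw [a2]; ring
    · have e1 : epz ((N:ℤ) * (-(c+1))) = 1 := epz_even ((hc2.add_one.neg).mul_left _)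
      have e2 : epz ((N:ℤ) * (-c)) = -1 := epz_odd (hNo.mul hc2.neg)
      rw [e1, e2]
      have e3 : epz ((r₀:ℤ) + c * N + 1) = epz ((r₀:ℤ)) := by
        rw [epz_eq_iff]
        have : Odd (c * N) := hc2.mul hNo
        rcases this with ⟨k, hk⟩
        exact ⟨k + 1, by rw [hk]; ring⟩
      rw [e3]
      rcases Nat.even_or_odd r₀ with hr2 | hr2
      · have a1 : ¬ Even (r₀ - 1) := by
          rw [Nat.even_sub h1]; simp [hr2]
        rw [if_neg a1]
        have a2 : epz ((r₀:ℤ)) = 1 := epz_even ((Int.even_coe_nat r₀).mpr hr2)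
        rw [a2]; ring
      · have a1 : Even (r₀ - 1) := by
          rw [Nat.even_sub h1]
          simp [Nat.not_even_iff_odd, hr2]
        rw [if_pos a1]
        have a2 : epz ((r₀:ℤ)) = -1 := epz_odd (by exact_mod_cast hr2)
        rw [a2]; ring

lemma sgnz_epz_mul (k : ℤ) (a : ℝ) (ha : 0 ≤ a) :
    sgnz (((epz k : ℤ) : ℝ) * a) = if a = 0 then 0 else epz k :=
  sgnz_unit_mul (k.negOnePow) a ha

theorem key (N : ℕ) (hN : 1 ≤ N) (V : ℕ) : ∀ (m : ℕ → ℤ),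
    (∀ i, 1 ≤ i → i < N → m (i+1) ≤ m i) → (m 1 - m N ≤ (N:ℤ)) →
    (∑ i ∈ Finset.Icc 1 N, (m 1 - m i) = (V:ℤ)) →
    ∑ r ∈ Finset.Icc 1 N,
        epz ((r:ℤ) + ∑ l ∈ Finset.Icc 1 N, ⌊((r:ℝ) - ((m l : ℤ) : ℝ)) / (N:ℝ)⌋)
      = ∑ i ∈ Finset.Icc 1 N, epz ((i:ℤ) + m i + 1) := by
  induction V using Nat.strong_induction_on with
  | _ V IH =>
    intro m hsort hwin hV
    have hmono := mono_of_adj N m hsort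
    by_cases hall : ∀ i ∈ Finset.Icc 1 N, m i = m 1
    · -- base case: m constant on Icc 1 N
      obtain ⟨r₀, c, h1, h2, hc⟩ := exists_res N hN (m 1)
      have hL : ∀ r ∈ Finset.Icc 1 N,
          epz ((r:ℤ) + ∑ l ∈ Finset.Icc 1 N, ⌊((r:ℝ) - ((m l : ℤ):ℝ))/(N:ℝ)⌋)
          = (if r < r₀ then epz ((N:ℤ) * (-(c+1))) else epz ((N:ℤ) * (-c))) * epz r := by
        intro r hr
        rw [Finset.mem_Icc] at hr
        have hin : (∑ l ∈ Finset.Icc 1 N, ⌊((r:ℝ) - ((m l : ℤ):ℝ))/(N:ℝ)⌋)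
            = (N:ℤ) * (if r < r₀ then -(c+1) else -c) := by
          have hfl : ∀ l ∈ Finset.Icc 1 N,
              ⌊((r:ℝ) - ((m l : ℤ):ℝ))/(N:ℝ)⌋ = (if r < r₀ then -(c+1) else -c) := by
            intro l hl
            rw [hall l hl]
            exact floor_window N hN (m 1) r c r₀ hc hr.1 hr.2 h1 h2
          rw [Finset.sum_congr rfl hfl, Finset.sum_const, Nat.card_Icc,
            Nat.add_sub_cancel, nsmul_eq_mul]
        rw [hin]
        by_cases hlt : r < r₀
        · rw [if_pos hlt, if_pos hlt, add_comm, epz_add]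
        · rw [if_neg hlt, if_neg hlt, add_comm, epz_add]
      rw [Finset.sum_congr rfl hL]
      have hsplit : ∀ g : ℕ → ℤ, ∑ r ∈ Finset.Icc 1 N, g r
          = ∑ r ∈ Finset.Icc 1 (r₀ - 1), g r + ∑ r ∈ Finset.Ico r₀ (N+1), g r := by
        intro g
        have hIc : Finset.Icc 1 (r₀ - 1) = Finset.Ico 1 r₀ := by
          rw [← Finset.Ico_add_one_right_eq_Icc]
          congr 1
          omega
        rw [hIc, Finset.sum_Ico_consecutive g (by omega : 1 ≤ r₀) (by omega : r₀ ≤ N+1),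
          Finset.Ico_add_one_right_eq_Icc]
      rw [hsplit]
      have hA : ∑ r ∈ Finset.Icc 1 (r₀ - 1),
          (if r < r₀ then epz ((N:ℤ) * (-(c+1))) else epz ((N:ℤ) * (-c))) * epz r
          = epz ((N:ℤ) * (-(c+1))) * ∑ r ∈ Finset.Icc 1 (r₀ - 1), epz r := by
        rw [Finset.mul_sum]
        refine Finset.sum_congr rfl (fun r hr => ?_)
        rw [Finset.mem_Icc] at hr
        rw [if_pos (show r < r₀ by omega)]
      have hB : ∑ r ∈ Finset.Ico r₀ (N+1),
          (if r < r₀ then epz ((N:ℤ) * (-(c+1))) else epz ((N:ℤ) * (-c))) * epz r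
          = epz ((N:ℤ) * (-c)) * ∑ r ∈ Finset.Ico r₀ (N+1), epz r := by
        rw [Finset.mul_sum]
        refine Finset.sum_congr rfl (fun r hr => ?_)
        rw [Finset.mem_Ico] at hr
        rw [if_neg (show ¬ r < r₀ by omega)]
      have hC : ∑ r ∈ Finset.Ico r₀ (N+1), epz r
          = (∑ r ∈ Finset.Icc 1 N, epz (r:ℤ)) - ∑ r ∈ Finset.Icc 1 (r₀-1), epz (r:ℤ) := by
        rw [hsplit (fun r => epz (r:ℤ))]; ring
      have hR : ∑ i ∈ Finset.Icc 1 N, epz ((i:ℤ) + m i + 1)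
          = epz ((r₀:ℤ) + c * N + 1) * ∑ r ∈ Finset.Icc 1 N, epz (r:ℤ) := by
        rw [Finset.mul_sum]
        apply Finset.sum_congr rfl
        intro i hi
        rw [hall i hi, hc, ← epz_add]
        congr 1
        ring
      rw [hA, hB, hC, hR]
      exact base_calc N r₀ c hN h1 h2
    · -- inductive step
      push_neg at hall
      obtain ⟨i₀, hi₀, hi₀ne⟩ := hall
      have hi₀' := Finset.mem_Icc.mp hi₀
      have hjsetne : ((Finset.Icc 1 N).filter (fun i => m i < m 1)).Nonempty := by
        refine ⟨i₀, Finset.mem_filter.mpr ⟨hi₀, ?_⟩⟩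
        have := hmono 1 i₀ le_rfl hi₀'.1 hi₀'.2
        omega
      set j := ((Finset.Icc 1 N).filter (fun i => m i < m 1)).min' hjsetne with hjdef
      have hjmem : j ∈ (Finset.Icc 1 N).filter (fun i => m i < m 1) :=
        Finset.min'_mem _ _
      rw [Finset.mem_filter, Finset.mem_Icc] at hjmem
      obtain ⟨⟨hj1, hjN⟩, hmj⟩ := hjmem
      have hjne1 : j ≠ 1 := fun h => by rw [h] at hmj; omega
      have hfirst : ∀ l, 1 ≤ l → l < j → m l = m 1 := by
        intro l hl1 hlj
        have hlN : l ≤ N := by omega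
        have hnot : l ∉ (Finset.Icc 1 N).filter (fun i => m i < m 1) :=
          fun hmem => absurd (Finset.min'_le _ l hmem) (by omega)
        rw [Finset.mem_filter, Finset.mem_Icc] at hnot
        push_neg at hnot
        have h3 := hnot ⟨hl1, hlN⟩
        have h4 := hmono 1 l le_rfl hl1 hlN
        omega
      have hjIcc : j ∈ Finset.Icc 1 N := Finset.mem_Icc.mpr ⟨hj1, hjN⟩
      set m2 := Function.update m j (m j + 1) with hm2
      have hm2j : m2 j = m j + 1 := Function.update_self j _ m
      have hm2ne : ∀ l, l ≠ j → m2 l = m l := fun l hl => Function.update_of_ne hl _ m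
      have hm21 : m2 1 = m 1 := hm2ne 1 (by omega)
      have hsort2 : ∀ i, 1 ≤ i → i < N → m2 (i+1) ≤ m2 i := by
        intro i hi1 hiN
        by_cases h : i + 1 = j
        · rw [h, hm2j, hm2ne i (by omega)]
          have := hfirst i hi1 (by omega)
          omega
        · by_cases h' : i = j
          · rw [hm2ne (i+1) h, h', hm2j]
            have := hsort i hi1 hiN
            rw [← h']
            omega
          · rw [hm2ne (i+1) h, hm2ne i h']
            exact hsort i hi1 hiN
      have hwin2 : m2 1 - m2 N ≤ (N:ℤ) := by
        rw [hm21]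
        by_cases h : N = j
        · rw [h, hm2j]; rw [h] at hwin; omega
        · rw [hm2ne N h]; exact hwin
      have hsplitj : ∀ (f : ℕ → ℤ), ∑ i ∈ Finset.Icc 1 N, f i
          = f j + ∑ i ∈ (Finset.Icc 1 N).erase j, f i :=
        fun f => (Finset.add_sum_erase _ f hjIcc).symm
      have hVpos : 1 ≤ (V:ℤ) := by
        rw [← hV, hsplitj]
        have h5 : (0:ℤ) ≤ ∑ i ∈ (Finset.Icc 1 N).erase j, (m 1 - m i) := by
          apply Finset.sum_nonneg
          intro i hi
          have hi2 := Finset.mem_Icc.mp (Finset.mem_of_mem_erase hi)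
          have := hmono 1 i le_rfl hi2.1 hi2.2
          omega
        omega
      have hV2 : ∑ i ∈ Finset.Icc 1 N, (m2 1 - m2 i) = ((V - 1 : ℕ) : ℤ) := by
        rw [hsplitj (fun i => m2 1 - m2 i)]
        rw [hsplitj (fun i => m 1 - m i)] at hV
        have : ∑ i ∈ (Finset.Icc 1 N).erase j, (m2 1 - m2 i)
            = ∑ i ∈ (Finset.Icc 1 N).erase j, (m 1 - m i) := by
          apply Finset.sum_congr rfl
          intro i hi
          rw [hm21, hm2ne i (Finset.ne_of_mem_erase hi)]
        rw [this, hm21, hm2j]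
        have hVc : ((V - 1 : ℕ) : ℤ) = (V:ℤ) - 1 := by omega
        rw [hVc, ← hV]
        ring
      have hid := IH (V - 1) (by omega) m2 hsort2 hwin2 hV2
      -- the special residue r₀ for m j
      obtain ⟨r₀, c, hr1, hr2, hc⟩ := exists_res N hN (m j)
      have hr₀Icc : r₀ ∈ Finset.Icc 1 N := Finset.mem_Icc.mpr ⟨hr1, hr2⟩
      -- floor facts
      have flA : ∀ r : ℕ, 1 ≤ r → r ≤ N →
          ⌊((r:ℝ) - ((m j : ℤ):ℝ))/(N:ℝ)⌋ = if r < r₀ then -(c+1) else -c :=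
        fun r ha hb => floor_window N hN (m j) r c r₀ hc ha hb hr1 hr2
      have flB : ∀ r : ℕ, 1 ≤ r → r ≤ N →
          ⌊((r:ℝ) - ((m j + 1 : ℤ):ℝ))/(N:ℝ)⌋ = if r ≤ r₀ then -(c+1) else -c := by
        intro r ha hb
        by_cases hrN' : r₀ = N
        · have := floor_window N hN (m j + 1) r (c+1) 1 (by rw [hc, hrN']; push_cast; ring)
            ha hb le_rfl hN
          rw [this, if_neg (show ¬ r < 1 by omega), if_pos (show r ≤ r₀ by omega)]
        · have := floor_window N hN (m j + 1) r c (r₀ + 1) (by rw [hc]; push_cast; ring)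
            ha hb (by omega) (by omega)
          rw [this]
          by_cases h : r ≤ r₀
          · rw [if_pos (show r < r₀ + 1 by omega), if_pos h]
          · rw [if_neg (show ¬ r < r₀ + 1 by omega), if_neg h]
      -- inner sums
      have hF2 : ∀ r : ℕ, 1 ≤ r → r ≤ N → r ≠ r₀ →
          (∑ l ∈ Finset.Icc 1 N, ⌊((r:ℝ) - ((m2 l : ℤ):ℝ))/(N:ℝ)⌋)
          = ∑ l ∈ Finset.Icc 1 N, ⌊((r:ℝ) - ((m l : ℤ):ℝ))/(N:ℝ)⌋ := by
        intro r ha hb hne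
        apply Finset.sum_congr rfl
        intro l hl
        by_cases hlj : l = j
        · rw [hlj, hm2j, flA r ha hb, flB r ha hb]
          by_cases h : r < r₀
          · rw [if_pos (show r ≤ r₀ by omega), if_pos h]
          · rw [if_neg (show ¬ r ≤ r₀ by omega), if_neg h]
        · rw [hm2ne l hlj]
      have hF2r₀ :
          (∑ l ∈ Finset.Icc 1 N, ⌊((r₀:ℝ) - ((m2 l : ℤ):ℝ))/(N:ℝ)⌋)
          = (∑ l ∈ Finset.Icc 1 N, ⌊((r₀:ℝ) - ((m l : ℤ):ℝ))/(N:ℝ)⌋) - 1 := by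
        rw [hsplitj (fun l => ⌊((r₀:ℝ) - ((m2 l : ℤ):ℝ))/(N:ℝ)⌋),
          hsplitj (fun l => ⌊((r₀:ℝ) - ((m l : ℤ):ℝ))/(N:ℝ)⌋)]
        have he : ∑ l ∈ (Finset.Icc 1 N).erase j, ⌊((r₀:ℝ) - ((m2 l : ℤ):ℝ))/(N:ℝ)⌋
            = ∑ l ∈ (Finset.Icc 1 N).erase j, ⌊((r₀:ℝ) - ((m l : ℤ):ℝ))/(N:ℝ)⌋ :=
          Finset.sum_congr rfl (fun l hl => by rw [hm2ne l (Finset.ne_of_mem_erase hl)])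
        rw [he, hm2j, flA r₀ hr1 hr2, flB r₀ hr1 hr2,
          if_neg (show ¬ r₀ < r₀ by omega), if_pos (le_refl r₀)]
        ring
      -- claim A
      have hclaim : epz ((r₀:ℤ) + ∑ l ∈ Finset.Icc 1 N, ⌊((r₀:ℝ) - ((m l : ℤ):ℝ))/(N:ℝ)⌋)
          = epz ((j:ℤ) + m j + 1) := by
        apply claimA N hN m j hj1 hjN _ _ r₀ hr1 hr2 c hc
        · intro l hl1 hlj
          rw [hfirst l hl1 hlj]
          constructor
          · exact hmj
          · have := hmono j N hj1 hjN le_rfl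
            omega
        · intro l hjl hlN
          constructor
          · have h6 := hmono l N (by omega) hlN le_rfl
            omega
          · exact hmono j l hj1 hjl hlN
      -- assemble
      have hsplitr : ∀ (f : ℕ → ℤ), ∑ r ∈ Finset.Icc 1 N, f r
          = f r₀ + ∑ r ∈ (Finset.Icc 1 N).erase r₀, f r :=
        fun f => (Finset.add_sum_erase _ f hr₀Icc).symm
      rw [hsplitr (fun r => epz ((r:ℤ) + ∑ l ∈ Finset.Icc 1 N, ⌊((r:ℝ) - ((m l : ℤ):ℝ))/(N:ℝ)⌋)),
        hsplitj (fun i => epz ((i:ℤ) + m i + 1))]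
      rw [hsplitr (fun r => epz ((r:ℤ) + ∑ l ∈ Finset.Icc 1 N, ⌊((r:ℝ) - ((m2 l : ℤ):ℝ))/(N:ℝ)⌋)),
        hsplitj (fun i => epz ((i:ℤ) + m2 i + 1))] at hid
      have e1 : ∑ r ∈ (Finset.Icc 1 N).erase r₀,
          epz ((r:ℤ) + ∑ l ∈ Finset.Icc 1 N, ⌊((r:ℝ) - ((m2 l : ℤ):ℝ))/(N:ℝ)⌋)
          = ∑ r ∈ (Finset.Icc 1 N).erase r₀,
          epz ((r:ℤ) + ∑ l ∈ Finset.Icc 1 N, ⌊((r:ℝ) - ((m l : ℤ):ℝ))/(N:ℝ)⌋) := by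
        refine Finset.sum_congr rfl (fun r hr => ?_)
        have hrI := Finset.mem_Icc.mp (Finset.mem_of_mem_erase hr)
        rw [hF2 r hrI.1 hrI.2 (Finset.ne_of_mem_erase hr)]
      have e2 : ∑ i ∈ (Finset.Icc 1 N).erase j, epz ((i:ℤ) + m2 i + 1)
          = ∑ i ∈ (Finset.Icc 1 N).erase j, epz ((i:ℤ) + m i + 1) :=
        Finset.sum_congr rfl (fun i hi => by rw [hm2ne i (Finset.ne_of_mem_erase hi)])
      rw [e1, e2, hF2r₀, hm2j] at hid
      have ha : epz ((r₀:ℤ) + ((∑ l ∈ Finset.Icc 1 N, ⌊((r₀:ℝ) - ((m l : ℤ):ℝ))/(N:ℝ)⌋) - 1))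
          = - epz ((r₀:ℤ) + ∑ l ∈ Finset.Icc 1 N, ⌊((r₀:ℝ) - ((m l : ℤ):ℝ))/(N:ℝ)⌋) := by
        have h8 : (r₀:ℤ) + ∑ l ∈ Finset.Icc 1 N, ⌊((r₀:ℝ) - ((m l : ℤ):ℝ))/(N:ℝ)⌋
            = ((r₀:ℤ) + ((∑ l ∈ Finset.Icc 1 N, ⌊((r₀:ℝ) - ((m l : ℤ):ℝ))/(N:ℝ)⌋) - 1)) + 1 := by
          ring
        rw [h8, epz_succ]
        ring
      have hb : epz ((j:ℤ) + (m j + 1) + 1) = - epz ((j:ℤ) + m j + 1) := by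
        have h9 : (j:ℤ) + (m j + 1) + 1 = ((j:ℤ) + m j + 1) + 1 := by ring
        rw [h9, epz_succ]
      rw [ha, hb] at hid
      rw [hclaim]
      linarith [hid]

lemma prod_epz (s : Finset ℕ) (k : ℕ → ℤ) :
    ∏ i ∈ s, ((epz (k i) : ℤ) : ℝ) = ((epz (∑ i ∈ s, k i) : ℤ) : ℝ) := by
  classical
  induction s using Finset.induction_on with
  | empty => simp [epz]
  | @insert a s ha ih =>
    rw [Finset.prod_insert ha, Finset.sum_insert ha, ih, epz_add]
    push_cast
    ring

lemma epz_mul_cast (a b : ℤ) : ((epz a : ℤ) : ℝ) * ((epz b : ℤ) : ℝ) = ((epz (a + b) : ℤ) : ℝ) := by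
  rw [epz_add]; push_cast; ring

lemma cosqq (N : ℕ) (l : ℕ → ℝ) (i : ℕ) :
    Real.cos (π * qq N l i)
      = ((epz ((N:ℤ) - i + ⌊(N:ℝ) * pp N l i + N/2⌋) : ℤ) : ℝ)
        * Real.sin (π * Int.fract ((N:ℝ) * pp N l i + N/2)) := by
  have h : π * qq N l i
      = (π/2 - π * ((N:ℝ) * pp N l i + N/2)) + (((N:ℤ) - i : ℤ) : ℝ) * π := by
    unfold qq; push_cast; ring
  rw [h, cos_pi_decomp, Real.cos_pi_div_two_sub, sin_pi_decomp, ← mul_assoc,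
    epz_mul_cast]

lemma ggdecomp (N : ℕ) (hN : 1 ≤ N) (l : ℕ → ℝ) (r : ℕ) :
    gg N l r
      = ((epz ((r:ℤ) + N + ∑ i ∈ Finset.Icc 1 N,
            ⌊((r:ℝ) - ((N:ℝ) * pp N l i + N/2)) / (N:ℝ)⌋) : ℤ) : ℝ)
        * ∏ i ∈ Finset.Icc 1 N,
            (2 * Real.sin (π * Int.fract (((r:ℝ) - ((N:ℝ) * pp N l i + N/2)) / (N:ℝ)))) := by
  have hN' : (0:ℝ) < (N:ℝ) := by exact_mod_cast hN
  have hfac : ∀ i ∈ Finset.Icc 1 N,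
      2 * Real.cos (π * (pp N l i - (r:ℝ)/N))
        = ((epz (⌊((r:ℝ) - ((N:ℝ) * pp N l i + N/2)) / (N:ℝ)⌋ + 1) : ℤ) : ℝ)
          * (2 * Real.sin (π * Int.fract (((r:ℝ) - ((N:ℝ) * pp N l i + N/2)) / (N:ℝ)))) := by
    intro i _
    set x := ((r:ℝ) - ((N:ℝ) * pp N l i + N/2)) / (N:ℝ) with hx
    have h1 : π * (pp N l i - (r:ℝ)/N) = -(π * x) + -(π/2) := by
      rw [hx]
      field_simp
      ring
    have h2 : Real.cos (π * (pp N l i - (r:ℝ)/N)) = - Real.sin (π * x) := by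
      rw [h1]
      rw [show (-(π * x) + -(π/2)) = -((π * x) + π/2) by ring, Real.cos_neg,
        Real.cos_add_pi_div_two]
    rw [h2, sin_pi_decomp]
    have h3 : epz (⌊x⌋ + 1) = - epz ⌊x⌋ := epz_succ _
    rw [h3]
    push_cast
    ring
  unfold gg
  rw [Finset.prod_congr rfl hfac, Finset.prod_mul_distrib, prod_epz, epz_cast_pow r]
  rw [Finset.sum_add_distrib, Finset.sum_const, Nat.card_Icc, Nat.add_sub_cancel,
    nsmul_eq_mul, mul_one, ← mul_assoc, epz_mul_cast]
  have hXY : (r:ℤ) + (∑ i ∈ Finset.Icc 1 N,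
        ⌊((r:ℝ) - ((N:ℝ) * pp N l i + N/2)) / (N:ℝ)⌋ + (N:ℤ))
      = (r:ℤ) + N + ∑ i ∈ Finset.Icc 1 N,
        ⌊((r:ℝ) - ((N:ℝ) * pp N l i + N/2)) / (N:ℝ)⌋ := by ring
  rw [hXY]

open Classical in
theorem stmt_7 (N : ℕ) (hN : 2 ≤ N) (l : ℕ → ℝ)
    (hl : ∀ i ∈ Finset.Icc 1 (N - 1), 0 < l i ∧ l i < 1)
    (hsum : ∑ i ∈ Finset.Icc 1 (N - 1), l i < 1) :
    ((Finset.Icc 1 N).filter (fun i => 0 < Real.cos (Real.pi * qq N l i))).card =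
        ((Finset.Icc 1 N).filter (fun r => 0 < gg N l r)).card ∧
      ((Finset.Icc 1 N).filter (fun i => Real.cos (Real.pi * qq N l i) < 0)).card =
        ((Finset.Icc 1 N).filter (fun r => gg N l r < 0)).card ∧
      ((Finset.Icc 1 N).filter (fun i => Real.cos (Real.pi * qq N l i) = 0)).card =
        ((Finset.Icc 1 N).filter (fun r => gg N l r = 0)).card := by

  have hN1 : 1 ≤ N := by omega
  have hNr : (0:ℝ) < (N:ℝ) := by exact_mod_cast hN1
  set u : ℕ → ℝ := fun i => (N:ℝ) * pp N l i + (N:ℝ)/2 with hu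
  set mz : ℕ → ℤ := fun i => ⌈u i⌉ with hmz
  -- gaps
  have hppdiff : ∀ i j : ℕ, 1 ≤ i → i ≤ j → j ≤ N →
      pp N l i - pp N l j = ∑ k ∈ Finset.Ico i j, l k := by
    intro i j hi hij hjN
    unfold pp
    have h1 : ∀ a : ℕ, Finset.Icc a (N - 1) = Finset.Ico a N := by
      intro a
      rw [← Finset.Ico_add_one_right_eq_Icc]
      congr 1
      omega
    rw [h1 i, h1 j, ← Finset.sum_Ico_consecutive l hij hjN]
    ring
  have hgap : ∀ i j : ℕ, 1 ≤ i → i < j → j ≤ N → 0 < u i - u j ∧ u i - u j < N := by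
    intro i j hi hij hjN
    have hd : u i - u j = (N:ℝ) * ∑ k ∈ Finset.Ico i j, l k := by
      rw [hu]
      dsimp only
      rw [← hppdiff i j hi (le_of_lt hij) hjN]
      ring
    have hsub : Finset.Ico i j ⊆ Finset.Icc 1 (N-1) := by
      intro k hk
      rw [Finset.mem_Ico] at hk
      rw [Finset.mem_Icc]
      omega
    have hpos : 0 < ∑ k ∈ Finset.Ico i j, l k := by
      apply Finset.sum_pos
      · intro k hk
        exact (hl k (hsub hk)).1
      · exact ⟨i, Finset.mem_Ico.mpr ⟨le_refl i, hij⟩⟩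
    have hlt : ∑ k ∈ Finset.Ico i j, l k < 1 := by
      calc ∑ k ∈ Finset.Ico i j, l k ≤ ∑ k ∈ Finset.Icc 1 (N-1), l k :=
            Finset.sum_le_sum_of_subset_of_nonneg hsub (fun k hk _ => (hl k hk).1.le)
        _ < 1 := hsum
    constructor
    · rw [hd]; exact mul_pos hNr hpos
    · rw [hd]; nlinarith
  -- mz properties
  have hmz_le : ∀ i j : ℕ, 1 ≤ i → i ≤ j → j ≤ N → mz j ≤ mz i := by
    intro i j hi hij hjN
    rcases eq_or_lt_of_le hij with rfl | h
    · exact le_refl _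
    · exact Int.ceil_le_ceil (by linarith [(hgap i j hi h hjN).1])
  have hsortz : ∀ i, 1 ≤ i → i < N → mz (i+1) ≤ mz i :=
    fun i hi hiN => hmz_le i (i+1) hi (by omega) (by omega)
  have hwinz : mz 1 - mz N ≤ (N:ℤ) := by
    have h := (hgap 1 N le_rfl (by omega) le_rfl).2
    have h1 : u 1 ≤ ((mz N + N : ℤ):ℝ) := by
      push_cast
      linarith [Int.le_ceil (u N)]
    have h2 : mz 1 ≤ mz N + N := Int.ceil_le.mpr h1
    omega
  -- floor bridge
  have hFL : ∀ (r i : ℕ),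
      ⌊((r:ℝ) - u i)/(N:ℝ)⌋ = ⌊((r:ℝ) - ((mz i : ℤ):ℝ))/(N:ℝ)⌋ := by
    intro r i
    have hcast : (((r:ℤ) - mz i : ℤ):ℝ) = (r:ℝ) - ((mz i : ℤ):ℝ) := by push_cast; ring
    have h1 : (((r:ℤ) - mz i : ℤ):ℝ) ≤ (r:ℝ) - u i := by
      rw [hcast]
      linarith [Int.le_ceil (u i)]
    have h2 : (r:ℝ) - u i < (((r:ℤ) - mz i : ℤ):ℝ) + 1 := by
      rw [hcast]
      have := Int.ceil_lt_add_one (u i)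
      push_cast
      linarith [Int.ceil_lt_add_one (u i)]
    have := floor_div_shift ((r:ℝ) - u i) ((r:ℤ) - mz i) N hN1 h1 h2
    rw [this, hcast]
  -- KEY instance
  have hVnn : 0 ≤ ∑ i ∈ Finset.Icc 1 N, (mz 1 - mz i) := by
    apply Finset.sum_nonneg
    intro i hi
    have hi2 := Finset.mem_Icc.mp hi
    have := hmz_le 1 i le_rfl hi2.1 hi2.2
    omega
  have hkey := key N hN1 (∑ i ∈ Finset.Icc 1 N, (mz 1 - mz i)).toNat mz hsortz hwinz
    (by rw [Int.toNat_of_nonneg hVnn])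
  have hkey' : ∑ r ∈ Finset.Icc 1 N, epz ((r:ℤ) + ∑ i ∈ Finset.Icc 1 N, ⌊((r:ℝ) - u i)/(N:ℝ)⌋)
      = ∑ i ∈ Finset.Icc 1 N, epz ((i:ℤ) + mz i + 1) := by
    rw [← hkey]
    refine Finset.sum_congr rfl (fun r _ => ?_)
    congr 1
    congr 1
    exact Finset.sum_congr rfl (fun i _ => hFL r i)
  -- zero sets and bijection
  set Zc : Finset ℕ := (Finset.Icc 1 N).filter (fun i => Int.fract (u i) = 0) with hZc
  set Zg : Finset ℕ := (Finset.Icc 1 N).filter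
      (fun r => ∃ i ∈ Finset.Icc 1 N, Int.fract (((r:ℝ) - u i)/(N:ℝ)) = 0) with hZg
  set ff : ℕ → ℕ := fun i => ((mz i - 1) % (N:ℤ)).toNat + 1 with hff
  have hNz : (0:ℤ) < (N:ℤ) := by exact_mod_cast hN1
  have hmodb : ∀ a : ℤ, 0 ≤ (a - 1) % (N:ℤ) ∧ (a - 1) % (N:ℤ) < N :=
    fun a => ⟨Int.emod_nonneg _ (by omega), Int.emod_lt_of_pos _ hNz⟩
  have hffb : ∀ i, 1 ≤ ff i ∧ ff i ≤ N := by
    intro i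
    have := hmodb (mz i)
    simp only [hff]
    omega
  have hffc : ∀ i, ((ff i : ℕ) : ℤ) = (mz i - 1) % (N:ℤ) + 1 := by
    intro i
    have := hmodb (mz i)
    simp only [hff]
    push_cast [Int.toNat_of_nonneg this.1]
    ring
  have hffdvd : ∀ i, mz i - ((ff i : ℕ):ℤ) = (N:ℤ) * ((mz i - 1) / (N:ℤ)) := by
    intro i
    have h2 := Int.emod_add_mul_ediv (mz i - 1) (N:ℤ)
    rw [hffc i]
    linarith
  have hZc_int : ∀ i ∈ Zc, u i = ((mz i : ℤ):ℝ) := by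
    intro i hi
    rw [hZc, Finset.mem_filter] at hi
    have h1 : u i = ((⌊u i⌋ : ℤ):ℝ) := by
      have h2 := Int.fract_add_floor (u i)
      rw [hi.2] at h2
      linarith
    rw [hmz]
    dsimp only
    rw [h1, Int.ceil_intCast]
  have hfract0 : ∀ i ∈ Zc, Int.fract (((ff i:ℝ) - u i)/(N:ℝ)) = 0 := by
    intro i hi
    have hd := hffdvd i
    have harg : ((ff i:ℝ) - u i)/(N:ℝ) = ((-( (mz i - 1) / (N:ℤ)) : ℤ):ℝ) := by
      rw [hZc_int i hi]
      have hc1 : ((ff i:ℝ)) - ((mz i : ℤ):ℝ) = (((ff i:ℕ):ℤ) - mz i : ℤ) := by push_cast; ring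
      rw [hc1]
      have hc2 : (((ff i:ℕ):ℤ) - mz i : ℤ) = -((N:ℤ) * ((mz i - 1) / (N:ℤ))) := by omega
      rw [hc2]
      push_cast
      field_simp
    rw [harg, Int.fract_intCast]
  have hffZg : ∀ i ∈ Zc, ff i ∈ Zg := by
    intro i hi
    have hiI : i ∈ Finset.Icc 1 N := Finset.mem_of_mem_filter i hi
    simp only [hZg, Finset.mem_filter]
    exact ⟨Finset.mem_Icc.mpr ⟨(hffb i).1, (hffb i).2⟩, ⟨i, hiI, hfract0 i hi⟩⟩
  have hdwin : ∀ (x d : ℤ), x = (N:ℤ) * d → -(N:ℤ) < x → x < N → x = 0 := by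
    intro x d h h1 h2
    rcases lt_trichotomy d 0 with h3|h3|h3
    · nlinarith
    · rw [h, h3]; ring
    · nlinarith
  have hZc_gap : ∀ a ∈ Zc, ∀ b ∈ Zc, a < b → 0 < mz a - mz b ∧ mz a - mz b < N := by
    intro a ha b hb hab
    have ha2 := Finset.mem_Icc.mp (Finset.mem_of_mem_filter a ha)
    have hb2 := Finset.mem_Icc.mp (Finset.mem_of_mem_filter b hb)
    have hg := hgap a b ha2.1 hab hb2.2
    have hr : u a - u b = ((mz a - mz b : ℤ):ℝ) := by
      rw [hZc_int a ha, hZc_int b hb]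
      push_cast
      ring
    rw [hr] at hg
    constructor
    · exact_mod_cast hg.1
    · exact_mod_cast hg.2
  have hffinj : ∀ a, a ∈ Zc → ∀ b, b ∈ Zc → ff a = ff b → a = b := by
    intro a ha b hb heq
    by_contra hne
    have main : ∀ x y, x ∈ Zc → y ∈ Zc → x < y → ff x = ff y → False := by
      intro x y hx hy hxy he
      have hgz := hZc_gap x hx y hy hxy
      have hdx := hffdvd x
      have hdy := hffdvd y
      have hxyd : mz x - mz y = (N:ℤ) * ((mz x - 1)/(N:ℤ) - (mz y - 1)/(N:ℤ)) := by
        have : ((ff x : ℕ):ℤ) = ((ff y : ℕ):ℤ) := by exact_mod_cast congrArg (Nat.cast : ℕ → ℤ) he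
        rw [mul_sub]
        omega
      have := hdwin _ _ hxyd (by omega) (by omega)
      omega
    rcases Nat.lt_or_ge a b with h|h
    · exact main a b ha hb h heq
    · exact main b a hb ha (by omega) heq.symm
  have hffsurj : ∀ r ∈ Zg, ∃ i, ∃ _ : i ∈ Zc, ff i = r := by
    intro r hr
    simp only [hZg, Finset.mem_filter] at hr
    obtain ⟨hrI, i, hiI, hfr⟩ := hr
    have hrI2 := Finset.mem_Icc.mp hrI
    set k := ⌊((r:ℝ) - u i)/(N:ℝ)⌋ with hk
    have h1 : ((r:ℝ) - u i)/(N:ℝ) = ((k : ℤ):ℝ) := by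
      have h2 := Int.fract_add_floor (((r:ℝ) - u i)/(N:ℝ))
      rw [hfr] at h2
      rw [hk]
      linarith
    have hui : u i = (((r:ℤ) - N * k : ℤ):ℝ) := by
      have h3 : (r:ℝ) - u i = (N:ℝ) * ((k : ℤ):ℝ) := by
        field_simp at h1
        linarith
      push_cast
      push_cast at h3
      linarith
    have hiZc : i ∈ Zc := by
      simp only [hZc, Finset.mem_filter]
      exact ⟨hiI, by rw [hui, Int.fract_intCast]⟩
    refine ⟨i, hiZc, ?_⟩
    have hmzi : mz i = (r:ℤ) - N * k := by
      simp only [hmz]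
      rw [hui, Int.ceil_intCast]
    have hdd := hffdvd i
    have hb1 := hffb i
    have heq0 : ((ff i : ℕ):ℤ) - (r:ℤ) = (N:ℤ) * (-k - (mz i - 1)/(N:ℤ)) := by
      rw [mul_sub, mul_neg]
      omega
    have := hdwin _ _ heq0 (by omega) (by omega)
    omega
  -- claim A at the zeros
  have hueq : ∀ i : ℕ, (N:ℝ) * pp N l i + (N:ℝ)/2 = u i := by
    intro i
    simp only [hu]
  have hclaimZ : ∀ i ∈ Zc,
      epz (((ff i : ℕ):ℤ) + ∑ l' ∈ Finset.Icc 1 N, ⌊((ff i:ℝ) - ((mz l' : ℤ):ℝ))/(N:ℝ)⌋)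
        = epz ((i:ℤ) + mz i + 1) := by
    intro i hi
    have hiI := Finset.mem_Icc.mp (Finset.mem_of_mem_filter i hi)
    have hint := hZc_int i hi
    have hd := hffdvd i
    apply claimA N hN1 mz i hiI.1 hiI.2 _ _ (ff i) (hffb i).1 (hffb i).2 ((mz i - 1)/(N:ℤ))
      (by linarith [hd])
    · intro l' h1 h2
      have hg := hgap l' i h1 h2 hiI.2
      constructor
      · have hx : ((mz i : ℤ):ℝ) < u l' := by rw [← hint]; linarith
        simp only [hmz]
        exact Int.lt_ceil.mpr hx
      · have hx : u l' ≤ ((mz i + N : ℤ):ℝ) := by push_cast; push_cast at hint; linarith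
        simp only [hmz]
        exact Int.ceil_le.mpr hx
    · intro l' h1 h2
      rcases eq_or_lt_of_le h1 with rfl | h
      · exact ⟨by omega, le_refl _⟩
      · have hg := hgap i l' hiI.1 h h2
        constructor
        · have hx : ((mz i - (N:ℤ) : ℤ):ℝ) < u l' := by push_cast; push_cast at hint; linarith
          simp only [hmz]
          exact Int.lt_ceil.mpr hx
        · have hx : u l' ≤ ((mz i : ℤ):ℝ) := by rw [← hint]; linarith
          simp only [hmz]
          exact Int.ceil_le.mpr hx
  -- zero sums and cards
  have hzsum : ∑ i ∈ Zc, epz ((N:ℤ) + ((i:ℤ) + mz i + 1))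
      = ∑ r ∈ Zg, epz ((r:ℤ) + N + ∑ i ∈ Finset.Icc 1 N, ⌊((r:ℝ) - u i)/(N:ℝ)⌋) := by
    refine Finset.sum_bij (fun i _ => ff i) hffZg hffinj hffsurj ?_
    intro i hi
    have h1 : ∑ i' ∈ Finset.Icc 1 N, ⌊((ff i:ℝ) - u i')/(N:ℝ)⌋
        = ∑ l' ∈ Finset.Icc 1 N, ⌊((ff i:ℝ) - ((mz l' : ℤ):ℝ))/(N:ℝ)⌋ :=
      Finset.sum_congr rfl (fun i' _ => hFL (ff i) i')
    rw [h1]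
    have h2 : ((ff i:ℕ):ℤ) + (N:ℤ) + (∑ l' ∈ Finset.Icc 1 N, ⌊((ff i:ℝ) - ((mz l' : ℤ):ℝ))/(N:ℝ)⌋)
        = (N:ℤ) + (((ff i:ℕ):ℤ) + ∑ l' ∈ Finset.Icc 1 N, ⌊((ff i:ℝ) - ((mz l' : ℤ):ℝ))/(N:ℝ)⌋) := by
      ring
    rw [h2, epz_add ((N:ℤ)) ((i:ℤ) + mz i + 1),
      epz_add ((N:ℤ)) (((ff i:ℕ):ℤ) + ∑ l' ∈ Finset.Icc 1 N, ⌊((ff i:ℝ) - ((mz l' : ℤ):ℝ))/(N:ℝ)⌋),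
      hclaimZ i hi]
  have hzcard : Zc.card = Zg.card := Finset.card_bij (fun i _ => ff i) hffZg hffinj hffsurj
  -- sign decompositions
  have hsgnc : ∀ i ∈ Finset.Icc 1 N, sgnz (Real.cos (Real.pi * qq N l i))
      = if Int.fract (u i) = 0 then 0 else epz ((N:ℤ) - i + ⌊u i⌋) := by
    intro i _
    have hd := cosqq N l i
    rw [hueq i] at hd
    rw [hd, sgnz_epz_mul _ _ (sin_fract_nonneg _),
      if_congr (sin_fract_eq_zero_iff (u i)) rfl rfl]
  have hsgng : ∀ r ∈ Finset.Icc 1 N, sgnz (gg N l r)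
      = if (∃ i ∈ Finset.Icc 1 N, Int.fract (((r:ℝ) - u i)/(N:ℝ)) = 0) then 0
        else epz ((r:ℤ) + N + ∑ i ∈ Finset.Icc 1 N, ⌊((r:ℝ) - u i)/(N:ℝ)⌋) := by
    intro r _
    have hd := ggdecomp N hN1 l r
    simp only [hueq] at hd
    rw [hd, sgnz_epz_mul _ _ (Finset.prod_nonneg (fun i _ =>
      mul_nonneg (by norm_num) (sin_fract_nonneg _)))]
    have hprod0 : (∏ i ∈ Finset.Icc 1 N,
        (2 * Real.sin (Real.pi * Int.fract (((r:ℝ) - u i)/(N:ℝ))))) = 0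
        ↔ (∃ i ∈ Finset.Icc 1 N, Int.fract (((r:ℝ) - u i)/(N:ℝ)) = 0) := by
      rw [Finset.prod_eq_zero_iff]
      apply exists_congr
      intro i
      constructor
      · rintro ⟨hiI, h0⟩
        rcases mul_eq_zero.mp h0 with h|h
        · norm_num at h
        · exact ⟨hiI, (sin_fract_eq_zero_iff _).mp h⟩
      · rintro ⟨hiI, h0⟩
        exact ⟨hiI, by rw [(sin_fract_eq_zero_iff _).mpr h0]; ring⟩
    rw [if_congr hprod0 rfl rfl]
  -- main signed-sum equality
  have hsum_eq : ∑ i ∈ Finset.Icc 1 N, sgnz (Real.cos (Real.pi * qq N l i))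
      = ∑ r ∈ Finset.Icc 1 N, sgnz (gg N l r) := by
    rw [Finset.sum_congr rfl hsgnc, Finset.sum_congr rfl hsgng]
    have hpc' : ∀ i ∈ Finset.Icc 1 N,
        (if Int.fract (u i) = 0 then (0:ℤ) else epz ((N:ℤ) - i + ⌊u i⌋))
        = epz ((N:ℤ) + ((i:ℤ) + mz i + 1))
          - (if Int.fract (u i) = 0 then epz ((N:ℤ) + ((i:ℤ) + mz i + 1)) else 0) := by
      intro i _
      by_cases hp : Int.fract (u i) = 0
      · rw [if_pos hp, if_pos hp]; ring
      · rw [if_neg hp, if_neg hp, sub_zero]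
        have hfl : mz i = ⌊u i⌋ + 1 := by
          simp only [hmz]
          have h1 : ⌈u i⌉ ≤ ⌊u i⌋ + 1 := Int.ceil_le_floor_add_one _
          have hfr : 0 < Int.fract (u i) := lt_of_le_of_ne (Int.fract_nonneg _) (Ne.symm hp)
          have h3 := Int.fract_add_floor (u i)
          have h2 : ⌊u i⌋ < ⌈u i⌉ := Int.lt_ceil.mpr (by linarith)
          omega
        rw [epz_eq_iff, hfl]
        exact ⟨-(i:ℤ) - 1, by ring⟩
    have hpg' : ∀ r ∈ Finset.Icc 1 N,
        (if (∃ i ∈ Finset.Icc 1 N, Int.fract (((r:ℝ) - u i)/(N:ℝ)) = 0) then (0:ℤ)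
          else epz ((r:ℤ) + N + ∑ i ∈ Finset.Icc 1 N, ⌊((r:ℝ) - u i)/(N:ℝ)⌋))
        = epz ((r:ℤ) + N + ∑ i ∈ Finset.Icc 1 N, ⌊((r:ℝ) - u i)/(N:ℝ)⌋)
          - (if (∃ i ∈ Finset.Icc 1 N, Int.fract (((r:ℝ) - u i)/(N:ℝ)) = 0)
            then epz ((r:ℤ) + N + ∑ i ∈ Finset.Icc 1 N, ⌊((r:ℝ) - u i)/(N:ℝ)⌋) else 0) := by
      intro r _
      by_cases hp : (∃ i ∈ Finset.Icc 1 N, Int.fract (((r:ℝ) - u i)/(N:ℝ)) = 0)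
      · rw [if_pos hp, if_pos hp]; ring
      · rw [if_neg hp, if_neg hp, sub_zero]
    rw [Finset.sum_congr rfl hpc', Finset.sum_congr rfl hpg',
      Finset.sum_sub_distrib, Finset.sum_sub_distrib]
    have hZcset : Zc = (Finset.Icc 1 N).filter (fun i => Int.fract (u i) = 0) := by
      ext x
      simp only [hZc, Finset.mem_filter]
    have hZgset : Zg = (Finset.Icc 1 N).filter
        (fun (r : ℕ) => ∃ i ∈ Finset.Icc 1 N, Int.fract (((r:ℝ) - u i)/(N:ℝ)) = 0) := by
      ext x
      simp only [hZg, Finset.mem_filter]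
    rw [hZcset, hZgset] at hzsum
    rw [Finset.sum_filter, Finset.sum_filter] at hzsum
    have htot : ∑ i ∈ Finset.Icc 1 N, epz ((N:ℤ) + ((i:ℤ) + mz i + 1))
        = ∑ r ∈ Finset.Icc 1 N, epz ((r:ℤ) + N + ∑ i ∈ Finset.Icc 1 N, ⌊((r:ℝ) - u i)/(N:ℝ)⌋) := by
      rw [Finset.sum_congr rfl (fun (i : ℕ) _ => epz_add (N:ℤ) ((i:ℤ) + mz i + 1)),
        ← Finset.mul_sum, ← hkey', Finset.mul_sum]
      refine Finset.sum_congr rfl (fun r _ => ?_)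
      rw [← epz_add]
      congr 1
      ring
    rw [htot, hzsum]
    congr 1
    refine Finset.sum_congr rfl (fun x _ => ?_)
    by_cases hp : ∃ i ∈ Finset.Icc 1 N, Int.fract (((x:ℝ) - u i)/(N:ℝ)) = 0
    · rw [if_pos hp, if_pos hp]
    · rw [if_neg hp, if_neg hp]
  -- zero filter identifications
  have hzfc : (Finset.Icc 1 N).filter (fun i => Real.cos (Real.pi * qq N l i) = 0) = Zc := by
    ext i
    simp only [hZc, Finset.mem_filter]
    refine and_congr_right (fun _ => ?_)
    have hd := cosqq N l i
    rw [hueq i] at hd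
    rw [hd]
    constructor
    · intro h0
      rcases mul_eq_zero.mp h0 with h|h
      · exfalso
        rcases epz_eq_one_or ((N:ℤ) - i + ⌊u i⌋) with he|he <;> rw [he] at h <;> norm_num at h
      · exact (sin_fract_eq_zero_iff _).mp h
    · intro h0
      rw [(sin_fract_eq_zero_iff _).mpr h0]
      ring
  have hzfg : (Finset.Icc 1 N).filter (fun r => gg N l r = 0) = Zg := by
    ext r
    simp only [hZg, Finset.mem_filter]
    refine and_congr_right (fun _ => ?_)
    have hd := ggdecomp N hN1 l r
    simp only [hueq] at hd
    rw [hd]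
    constructor
    · intro h0
      rcases mul_eq_zero.mp h0 with h|h
      · exfalso
        rcases epz_eq_one_or ((r:ℤ) + N + ∑ i ∈ Finset.Icc 1 N, ⌊((r:ℝ) - u i)/(N:ℝ)⌋)
          with he|he <;> rw [he] at h <;> norm_num at h
      · obtain ⟨i, hiI, h1⟩ := Finset.prod_eq_zero_iff.mp h
        refine ⟨i, hiI, ?_⟩
        rcases mul_eq_zero.mp h1 with h2|h2
        · norm_num at h2
        · exact (sin_fract_eq_zero_iff _).mp h2
    · rintro ⟨i, hiI, h0⟩
      rw [Finset.prod_eq_zero_iff.mpr ⟨i, hiI, by rw [(sin_fract_eq_zero_iff _).mpr h0]; ring⟩]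
      ring
  -- finish
  have hsc := sum_sgnz (Finset.Icc 1 N) (fun i => Real.cos (Real.pi * qq N l i))
  have hsg := sum_sgnz (Finset.Icc 1 N) (fun r => gg N l r)
  have hpc := card_partition (Finset.Icc 1 N) (fun i => Real.cos (Real.pi * qq N l i))
  have hpg := card_partition (Finset.Icc 1 N) (fun r => gg N l r)
  have hzz : ((Finset.Icc 1 N).filter (fun i => Real.cos (Real.pi * qq N l i) = 0)).card
      = ((Finset.Icc 1 N).filter (fun r => gg N l r = 0)).card := by
    rw [hzfc, hzfg, hzcard]
  refine ⟨?_, ?_, hzz⟩ <;> omega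
end

section
/- Suppose β_i = N/2 - i + γ_i with γ_i ∈ ℤ and β_i < N p_i(λ') < β_i + 1 for all i. Then for any integer r with 1 ≤ r ≤ N and any integer k, it is impossible that (β_i - r)/N < k + 1/2 < (β_i - r + 1)/N for any i. -/
theorem stmt_10 (N : ℕ) (hN : 2 ≤ N) (l : ℕ → ℝ)
    (hl : ∀ i ∈ Finset.Icc 1 (N - 1), 0 < l i ∧ l i < 1)
    (hsum : ∑ i ∈ Finset.Icc 1 (N - 1), l i < 1)
    (γ : ℕ → ℤ) (β : ℕ → ℝ)
    (hβdef : ∀ i ∈ Finset.Icc 1 N, β i = (N : ℝ) / 2 - (i : ℝ) + (γ i : ℝ))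
    (hβ : ∀ i ∈ Finset.Icc 1 N, β i < (N : ℝ) * pp N l i ∧ (N : ℝ) * pp N l i < β i + 1) :
    ∀ r : ℕ, 1 ≤ r → r ≤ N → ∀ k : ℤ, ∀ i ∈ Finset.Icc 1 N,
      ¬((β i - (r : ℝ)) / N < (k : ℝ) + 1 / 2 ∧
        (k : ℝ) + 1 / 2 < (β i - (r : ℝ) + 1) / N) := by
  intro r hr hrN k i hi h
  obtain ⟨h1, h2⟩ := h
  have hβi := hβdef i hi
  have hN0 : (0:ℝ) < (N:ℝ) := by
    have : 0 < N := by omega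
    exact_mod_cast this
  rw [div_lt_iff₀ hN0] at h1
  rw [lt_div_iff₀ hN0] at h2
  rw [hβi] at h1 h2
  have h1' : ((γ i : ℤ) - i - r : ℤ) < N * k := by
    have : ((γ i : ℝ)) - i - r < (N : ℝ) * k := by nlinarith
    exact_mod_cast this
  have h2' : ((N : ℤ) * k : ℤ) < (γ i : ℤ) - i - r + 1 := by
    have : (N : ℝ) * k < (γ i : ℝ) - i - r + 1 := by nlinarith
    exact_mod_cast this
  omega
end

section
/- For a weight λ in P_{++}^{(h)} and λ' = (λ_1/h,...,λ_{N-1}/h), we have q^{(R)}_{σ^{-j}(λ)} = q_j(λ') for j = 1,...,N, where q^{(R)}_μ := (1/h)∑_{j=1}^{N-1} j(μ_j - 1) + (N-h)(N-1)/(2h) and q_j(λ') := -N p_j(λ') + (N+1)/2 - j. -/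
/-- The `ℤ_N` rotation `σ` on integrable weights:
`σ(λ) = (h - ∑ λ_j, λ_1, ..., λ_{N-2})` (coordinates outside `1..N-1` set to `0`). -/
def sigmaRot (N h : ℕ) (μ : ℕ → ℤ) : ℕ → ℤ := fun i =>
  if i = 1 then (h : ℤ) - ∑ j ∈ Finset.Icc 1 (N - 1), μ j
  else if i ≤ N - 1 then μ (i - 1) else 0

/-- `q^{(R)}_μ = (1/h) ∑_{j=1}^{N-1} j (μ_j - 1) + (N-h)(N-1)/(2h)`. -/
noncomputable def qR (N h : ℕ) (μ : ℕ → ℤ) : ℝ :=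
  (1 / (h : ℝ)) * ∑ j ∈ Finset.Icc 1 (N - 1), (j : ℝ) * ((μ j : ℝ) - 1)
    + ((N : ℝ) - h) * ((N : ℝ) - 1) / (2 * h)

lemma sumId (N : ℕ) : (∑ j ∈ Finset.Icc 1 N, (j : ℝ)) = N * (N + 1) / 2 := by
  induction N with
  | zero => simp
  | succ n ih =>
    rw [Finset.sum_Icc_succ_top (by omega : 1 ≤ n + 1), ih]
    push_cast; ring

/-- Lemma A: iterates shift coordinates. -/
lemma iterA (N h : ℕ) (lam : ℕ → ℤ) :
    ∀ k i, k + 1 ≤ i → i ≤ N - 1 → (sigmaRot N h)^[k] lam i = lam (i - k) := by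
  intro k
  induction k with
  | zero => intro i _ _; simp
  | succ k ih =>
    intro i hi1 hi2
    rw [Function.iterate_succ_apply']
    have h1 : i ≠ 1 := by omega
    simp only [sigmaRot, if_neg h1, if_pos hi2]
    rw [ih (i - 1) (by omega) (by omega)]
    congr 1; omega

/-- Lemma B: one-step recursion for the weighted sum, integer version. -/
lemma sumB (N h : ℕ) (hN : 2 ≤ N) (μ : ℕ → ℤ) :
    ∑ j ∈ Finset.Icc 1 (N - 1), (j : ℤ) * sigmaRot N h μ j
      = (∑ j ∈ Finset.Icc 1 (N - 1), (j : ℤ) * μ j) + h - N * μ (N - 1) := by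
  have e1 : Finset.Icc 1 (N - 1) = insert 1 (Finset.Icc 2 (N - 1)) := by
    ext x; simp; omega
  have split : ∑ j ∈ Finset.Icc 1 (N - 1), (j : ℤ) * sigmaRot N h μ j
      = 1 * sigmaRot N h μ 1 + ∑ j ∈ Finset.Icc 2 (N - 1), (j : ℤ) * sigmaRot N h μ j := by
    rw [e1, Finset.sum_insert (by simp)]; norm_num
  have e2 : sigmaRot N h μ 1 = (h : ℤ) - ∑ j ∈ Finset.Icc 1 (N - 1), μ j := by
    simp [sigmaRot]
  have e3 : ∑ j ∈ Finset.Icc 2 (N - 1), (j : ℤ) * sigmaRot N h μ j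
      = ∑ j ∈ Finset.Icc 2 (N - 1), (j : ℤ) * μ (j - 1) := by
    apply Finset.sum_congr rfl
    intro j hj
    simp only [Finset.mem_Icc] at hj
    have : j ≠ 1 := by omega
    simp [sigmaRot, this, hj.2]
  have e4 : ∑ j ∈ Finset.Icc 2 (N - 1), (j : ℤ) * μ (j - 1)
      = ∑ k ∈ Finset.Icc 1 (N - 2), ((k : ℤ) + 1) * μ k := by
    rw [show (2 : ℕ) = 1 + 1 from rfl, show N - 1 = 1 + (N - 2) by omega,
      ← Finset.map_add_left_Icc, Finset.sum_map]
    apply Finset.sum_congr rfl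
    intro k hk
    simp only [Finset.mem_Icc] at hk
    simp only [addLeftEmbedding_apply]
    congr 1
    · push_cast; ring
    · congr 1; omega
  have e5 : ∑ k ∈ Finset.Icc 1 (N - 1), ((k : ℤ) + 1) * μ k
      = (∑ k ∈ Finset.Icc 1 (N - 2), ((k : ℤ) + 1) * μ k) + N * μ (N - 1) := by
    rw [show N - 1 = (N - 2) + 1 by omega,
      Finset.sum_Icc_succ_top (by omega : 1 ≤ N - 2 + 1)]
    congr 1
    rw [show N - 2 + 1 = N - 1 by omega]
    have hc : ((N - 1 : ℕ) : ℤ) = (N : ℤ) - 1 := by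
      push_cast [Nat.cast_sub (by omega : 1 ≤ N)]; ring
    rw [hc]; ring
  have e6 : ∑ k ∈ Finset.Icc 1 (N - 1), ((k : ℤ) + 1) * μ k
      = (∑ k ∈ Finset.Icc 1 (N - 1), (k : ℤ) * μ k) + ∑ k ∈ Finset.Icc 1 (N - 1), μ k := by
    rw [← Finset.sum_add_distrib]; apply Finset.sum_congr rfl; intro k _; ring
  rw [split, e2, e3, e4]
  linarith [e5, e6]

lemma expSum (N : ℕ) (ν : ℕ → ℤ) :
    (∑ j ∈ Finset.Icc 1 (N - 1), (j : ℝ) * ((ν j : ℝ) - 1))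
      = (∑ j ∈ Finset.Icc 1 (N - 1), (j : ℝ) * (ν j : ℝ))
        - ∑ j ∈ Finset.Icc 1 (N - 1), (j : ℝ) := by
  rw [← Finset.sum_sub_distrib]; apply Finset.sum_congr rfl; intro j _; ring

lemma qRstep (N h : ℕ) (hN : 2 ≤ N) (hh : 0 < h) (μ : ℕ → ℤ) :
    qR N h (sigmaRot N h μ) = qR N h μ + 1 - N * (μ (N - 1) : ℝ) / h := by
  have key : (∑ j ∈ Finset.Icc 1 (N - 1), (j : ℝ) * ((sigmaRot N h μ j : ℤ) : ℝ))
      = (∑ j ∈ Finset.Icc 1 (N - 1), (j : ℝ) * (μ j : ℝ)) + h - N * (μ (N - 1) : ℝ) := by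
    have h1 := congrArg (fun z : ℤ => (z : ℝ)) (sumB N h hN μ)
    push_cast at h1
    exact h1
  have hh' : (h : ℝ) ≠ 0 := by positivity
  simp only [qR, expSum, key]
  field_simp
  ring

lemma baseC (N h : ℕ) (hN : 2 ≤ N) (hh : 0 < h) (lam : ℕ → ℤ) :
    qR N h lam = qq N (fun i => (lam i : ℝ) / h) N := by
  have hNe : Finset.Icc N (N - 1) = (∅ : Finset ℕ) := by
    rw [Finset.Icc_eq_empty]; omega
  have hs : (∑ j ∈ Finset.Icc 1 (N - 1), (j : ℝ)) = ((N : ℝ) - 1) * N / 2 := by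
    rw [sumId]
    push_cast [Nat.cast_sub (by omega : 1 ≤ N)]
    ring
  have hdiv : ∑ j ∈ Finset.Icc 1 (N - 1), (j : ℝ) * ((lam j : ℝ) / h)
      = (∑ j ∈ Finset.Icc 1 (N - 1), (j : ℝ) * (lam j : ℝ)) / h := by
    rw [Finset.sum_div]; apply Finset.sum_congr rfl; intro j _; ring
  have hh' : (h : ℝ) ≠ 0 := by positivity
  have hN' : (N : ℝ) ≠ 0 := by positivity
  unfold qR qq pp
  rw [hNe, expSum, hs]
  simp only [Finset.sum_empty, hdiv]
  field_simp
  ring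

lemma stepD (N : ℕ) (l : ℕ → ℝ) (j : ℕ) (hN : 2 ≤ N) (hj : 2 ≤ j) (hj2 : j ≤ N) :
    qq N l (j - 1) = qq N l j - N * l (j - 1) + 1 := by
  have e : Finset.Icc (j - 1) (N - 1) = insert (j - 1) (Finset.Icc j (N - 1)) := by
    ext x; simp; omega
  have hji : ((j - 1 : ℕ) : ℝ) = (j : ℝ) - 1 := by
    push_cast [Nat.cast_sub (by omega : 1 ≤ j)]; ring
  unfold qq pp
  rw [e, Finset.sum_insert (by simp; omega), hji]
  ring


theorem stmt_16 (N h : ℕ) (hN : 2 ≤ N) (hh : N < h) (lam : ℕ → ℤ)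
    (hpos : ∀ i ∈ Finset.Icc 1 (N - 1), 1 ≤ lam i)
    (hzero : ∀ i, i ∉ Finset.Icc 1 (N - 1) → lam i = 0)
    (hsum : ∑ i ∈ Finset.Icc 1 (N - 1), lam i < (h : ℤ)) :
    ∀ j ∈ Finset.Icc 1 N,
      qR N h ((sigmaRot N h)^[N - j] lam) = qq N (fun i => (lam i : ℝ) / h) j := by
  have hh0 : 0 < h := by omega
  have main : ∀ m, m ≤ N - 1 →
      qR N h ((sigmaRot N h)^[m] lam) = qq N (fun i => (lam i : ℝ) / h) (N - m) := by
    intro m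
    induction m with
    | zero => intro _; simpa using baseC N h hN hh0 lam
    | succ m ih =>
      intro hm
      rw [Function.iterate_succ_apply', qRstep N h hN hh0, ih (by omega),
        iterA N h lam m (N - 1) (by omega) le_rfl]
      have hD := stepD N (fun i => (lam i : ℝ) / h) (N - m) hN (by omega) (by omega)
      rw [show N - m - 1 = N - (m + 1) by omega] at hD
      rw [hD, show N - 1 - m = N - (m + 1) by omega]
      ring
  intro j hj
  simp only [Finset.mem_Icc] at hj
  have := main (N - j) (by omega)
  rwa [show N - (N - j) = j by omega] at this
end
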